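/- arXiv:1905.12972 — 9 statements merged into one kernel-verified Lean document; each statement's English description precedes it below -/
import Mathlib

section
/- Let f₁, f₂ be nonnegative functions in L₁(μ) with ‖f₁ + f₂‖₁ ≤ 1, and let 0 < ε < 1/5 satisfy 1 - ε² ≤ ‖f₁ - f₂‖₁. Define W = {t : |f₁(t) - f₂(t)| ≤ (1-ε)(f₁(t) + f₂(t))}. Then ∫_W (f₁ + f₂) dμ ≤ ε. -/
/-!
On `W` the inequality `|f₁ - f₂| ≤ (1 - ε)(f₁ + f₂)` rearranges to
`ε (f₁ + f₂) ≤ f₁ + f₂ - |f₁ - f₂|`, and the right-hand side is nonnegative everywhere.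
Hence `ε ∫_W (f₁ + f₂) ≤ ‖f₁ + f₂‖₁ - ‖f₁ - f₂‖₁ ≤ 1 - (1 - ε²) = ε²`.
-/

open MeasureTheory

section

variable {α : Type*} [MeasurableSpace α] {μ : Measure α}

theorem mul_setIntegral_le_integral_of_forall_mem {u r : α → ℝ} {s : Set α} {c : ℝ}
    (hs : NullMeasurableSet s μ) (hu : Integrable u μ) (hr : Integrable r μ)
    (hr0 : 0 ≤ᵐ[μ] r) (h : ∀ t ∈ s, c * u t ≤ r t) :
    c * ∫ t in s, u t ∂μ ≤ ∫ t, r t ∂μ :=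
  calc c * ∫ t in s, u t ∂μ = ∫ t in s, c * u t ∂μ := (integral_const_mul c u).symm
    _ ≤ ∫ t in s, r t ∂μ := setIntegral_mono_on₀ (hu.const_mul c).integrableOn hr.integrableOn hs h
    _ ≤ ∫ t, r t ∂μ := setIntegral_le_integral hr hr0

theorem mul_setIntegral_add_le_integral_add_sub_integral_abs_sub {f₁ f₂ : α → ℝ}
    (hf₁ : Integrable f₁ μ) (hf₂ : Integrable f₂ μ) (hf₁0 : 0 ≤ᵐ[μ] f₁) (hf₂0 : 0 ≤ᵐ[μ] f₂)
    (ε : ℝ) :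
    ε * ∫ t in {t | |f₁ t - f₂ t| ≤ (1 - ε) * (f₁ t + f₂ t)}, (f₁ t + f₂ t) ∂μ ≤
      ∫ t, (f₁ t + f₂ t) ∂μ - ∫ t, |f₁ t - f₂ t| ∂μ := by
  have hW : NullMeasurableSet {t | |f₁ t - f₂ t| ≤ (1 - ε) * (f₁ t + f₂ t)} μ :=
    AEStronglyMeasurable.nullMeasurableSet_le (hf₁.sub hf₂).abs.aestronglyMeasurable
      ((hf₁.add hf₂).const_mul (1 - ε)).aestronglyMeasurable
  have hgap0 : 0 ≤ᵐ[μ] fun t => f₁ t + f₂ t - |f₁ t - f₂ t| := by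
    filter_upwards [hf₁0, hf₂0] with t h₁ h₂
    simp only [Pi.zero_apply] at h₁ h₂ ⊢
    exact sub_nonneg.2 (abs_sub_le_iff.2 ⟨by linarith, by linarith⟩)
  have hsum_int : Integrable (fun t => f₁ t + f₂ t) μ := hf₁.add hf₂
  have habs_int : Integrable (fun t => |f₁ t - f₂ t|) μ := (hf₁.sub hf₂).abs
  rw [← integral_sub hsum_int habs_int]
  refine mul_setIntegral_le_integral_of_forall_mem hW hsum_int (hsum_int.sub habs_int) hgap0
    fun t ht => ?_
  have ht : |f₁ t - f₂ t| ≤ (1 - ε) * (f₁ t + f₂ t) := ht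
  linarith

end

theorem setIntegral_add_le_of_norm_sub_large_general
    {α : Type*} [MeasurableSpace α] (μ : Measure α)
    (f₁ f₂ : α → ℝ) (hf₁ : Integrable f₁ μ) (hf₂ : Integrable f₂ μ)
    (hf₁0 : 0 ≤ᵐ[μ] f₁) (hf₂0 : 0 ≤ᵐ[μ] f₂)
    (ε : ℝ) (hε0 : 0 < ε)
    (hsum : ∫ t, |f₁ t + f₂ t| ∂μ ≤ 1)
    (hdiff : 1 - ε ^ 2 ≤ ∫ t, |f₁ t - f₂ t| ∂μ) :
    ∫ t in {t | |f₁ t - f₂ t| ≤ (1 - ε) * (f₁ t + f₂ t)}, (f₁ t + f₂ t) ∂μ ≤ ε := by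
  have hsum_eq : ∫ t, |f₁ t + f₂ t| ∂μ = ∫ t, (f₁ t + f₂ t) ∂μ := by
    refine integral_congr_ae ?_
    filter_upwards [hf₁0, hf₂0] with t h₁ h₂
    exact abs_of_nonneg (add_nonneg h₁ h₂)
  have hkey := mul_setIntegral_add_le_integral_add_sub_integral_abs_sub hf₁ hf₂ hf₁0 hf₂0 ε
  refine le_of_mul_le_mul_left ?_ hε0
  linarith

/-- Let `f₁, f₂` be nonnegative functions in `L₁(μ)` with `‖f₁ + f₂‖₁ ≤ 1`, and let
`0 < ε < 1/5` satisfy `1 - ε² ≤ ‖f₁ - f₂‖₁`.  With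
`W = {t : |f₁ t - f₂ t| ≤ (1-ε) * (f₁ t + f₂ t)}` one has `∫_W (f₁ + f₂) dμ ≤ ε`. -/
theorem setIntegral_add_le_of_norm_sub_large
    {α : Type*} [MeasurableSpace α] (μ : Measure α)
    (f₁ f₂ : α → ℝ) (hf₁ : Integrable f₁ μ) (hf₂ : Integrable f₂ μ)
    (hf₁0 : 0 ≤ᵐ[μ] f₁) (hf₂0 : 0 ≤ᵐ[μ] f₂)
    (ε : ℝ) (hε0 : 0 < ε) (hε : ε < 1/5)
    (hsum : ∫ t, |f₁ t + f₂ t| ∂μ ≤ 1)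
    (hdiff : 1 - ε ^ 2 ≤ ∫ t, |f₁ t - f₂ t| ∂μ) :
    ∫ t in {t | |f₁ t - f₂ t| ≤ (1 - ε) * (f₁ t + f₂ t)}, (f₁ t + f₂ t) ∂μ ≤ ε :=
  setIntegral_add_le_of_norm_sub_large_general μ f₁ f₂ hf₁ hf₂ hf₁0 hf₂0 ε hε0 hsum hdiff
end

section
/- (Disjointification lemma.) Let 0 < ε < 1/5 and let f₁, f₂ ∈ L₁(μ) be nonnegative functions with ‖f₁ + f₂‖₁ ≤ 1 and 1 - ε² ≤ ‖f₁ - f₂‖₁. Then there exist nonnegative functions g₁, g₂ ∈ L₁(μ) with disjoint supports such that ‖g₁ + g₂‖₁ = 1 and ‖gᵢ - fᵢ‖₁ < 7ε for i = 1, 2. -/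
open MeasureTheory

/-- Auxiliary error bound: `∫ |(u-v)⁺/c - u| < 7ε` under suitable hypotheses. -/
lemma aux_err {α : Type*} [MeasurableSpace α] (μ : Measure α)
    (u v : α → ℝ) (hu : Integrable u μ) (hv : Integrable v μ)
    (hu0 : 0 ≤ᵐ[μ] u) (hv0 : 0 ≤ᵐ[μ] v)
    (c ε : ℝ) (hc0 : 0 < c) (hc1 : c ≤ 1)
    (hI : (∫ t, max (u t - v t) 0 ∂μ) ≤ c)
    (hminInt : Integrable (fun t => min (u t) (v t)) μ)
    (hM : (∫ t, min (u t) (v t) ∂μ) ≤ ε ^ 2 / 2)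
    (hcε : 1 - ε ^ 2 ≤ c)
    (hε0 : 0 < ε) (hε : ε < 1/5) :
    (∫ t, |max (u t - v t) 0 / c - u t| ∂μ) < 7 * ε := by
  have hd : (1:ℝ) ≤ 1 / c := by rw [le_div_iff₀ hc0]; linarith
  have hpos : Integrable (fun t => max (u t - v t) 0) μ := (hu.sub hv).pos_part
  have hRHSint : Integrable (fun t => (1/c - 1) * max (u t - v t) 0 + min (u t) (v t)) μ :=
    (hpos.const_mul _).add hminInt
  have hLHSint : Integrable (fun t => |max (u t - v t) 0 / c - u t|) μ :=
    ((hpos.div_const c).sub hu).abs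
  have hmono : (∫ t, |max (u t - v t) 0 / c - u t| ∂μ)
      ≤ ∫ t, ((1/c - 1) * max (u t - v t) 0 + min (u t) (v t)) ∂μ := by
    refine integral_mono_ae hLHSint hRHSint ?_
    filter_upwards [hu0, hv0] with t ha hb
    simp only [Pi.zero_apply] at ha hb
    set a := u t; set b := v t
    rcases le_total a b with h | h
    · rw [max_eq_right (by linarith), min_eq_left h]
      simp only [zero_div, zero_sub, abs_neg, abs_of_nonneg ha, mul_zero, zero_add]
      exact le_rfl
    · rw [max_eq_left (by linarith), min_eq_right h, div_eq_mul_one_div]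
      rw [abs_le]
      constructor <;>
        nlinarith [mul_nonneg (by linarith : (0:ℝ) ≤ 1/c - 1) (by linarith : (0:ℝ) ≤ a - b)]
  have hRHS : (∫ t, ((1/c - 1) * max (u t - v t) 0 + min (u t) (v t)) ∂μ)
      = (1/c - 1) * (∫ t, max (u t - v t) 0 ∂μ) + ∫ t, min (u t) (v t) ∂μ := by
    rw [integral_add (hpos.const_mul _) hminInt, integral_const_mul]
  have hIn : (0:ℝ) ≤ ∫ t, max (u t - v t) 0 ∂μ :=
    integral_nonneg fun t => le_max_right _ _
  have h1 : (1/c - 1) * (∫ t, max (u t - v t) 0 ∂μ) ≤ 1 - c := by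
    have := mul_le_mul_of_nonneg_left hI (by linarith : (0:ℝ) ≤ 1/c - 1)
    have hcc : (1/c - 1) * c = 1 - c := by field_simp
    linarith
  nlinarith [hmono, hRHS, h1, hM, hcε]

/-- Disjointification lemma: if `f₁, f₂ ∈ L₁(μ)` are nonnegative with `‖f₁ + f₂‖₁ ≤ 1` and
`1 - ε² ≤ ‖f₁ - f₂‖₁` for some `0 < ε < 1/5`, then there are nonnegative `g₁, g₂ ∈ L₁(μ)`
with disjoint supports (`g₁ · g₂ = 0` a.e.), `‖g₁ + g₂‖₁ = 1` and `‖gᵢ - fᵢ‖₁ < 7ε`. -/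
theorem exists_disjoint_support_approx
    {α : Type*} [MeasurableSpace α] (μ : Measure α)
    (f₁ f₂ : α → ℝ) (hf₁ : Integrable f₁ μ) (hf₂ : Integrable f₂ μ)
    (hf₁0 : 0 ≤ᵐ[μ] f₁) (hf₂0 : 0 ≤ᵐ[μ] f₂)
    (ε : ℝ) (hε0 : 0 < ε) (hε : ε < 1/5)
    (hsum : ∫ t, |f₁ t + f₂ t| ∂μ ≤ 1)
    (hdiff : 1 - ε ^ 2 ≤ ∫ t, |f₁ t - f₂ t| ∂μ) :
    ∃ g₁ g₂ : α → ℝ, Integrable g₁ μ ∧ Integrable g₂ μ ∧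
      0 ≤ᵐ[μ] g₁ ∧ 0 ≤ᵐ[μ] g₂ ∧
      (fun t => g₁ t * g₂ t) =ᵐ[μ] 0 ∧
      (∫ t, |g₁ t + g₂ t| ∂μ) = 1 ∧
      (∫ t, |g₁ t - f₁ t| ∂μ) < 7 * ε ∧ (∫ t, |g₂ t - f₂ t| ∂μ) < 7 * ε := by
  have hsub : Integrable (fun t => f₁ t - f₂ t) μ := hf₁.sub hf₂
  have habs : Integrable (fun t => |f₁ t - f₂ t|) μ := hsub.abs
  have haddabs : Integrable (fun t => |f₁ t + f₂ t|) μ := (hf₁.add hf₂).abs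
  set c := ∫ t, |f₁ t - f₂ t| ∂μ with hcdef
  have hc1 : c ≤ 1 := by
    refine le_trans (integral_mono_ae habs haddabs ?_) hsum
    filter_upwards [hf₁0, hf₂0] with t h1 h2
    simp only [Pi.zero_apply] at h1 h2
    rw [abs_of_nonneg (by linarith : (0:ℝ) ≤ f₁ t + f₂ t)]
    exact abs_le.mpr ⟨by linarith, by linarith⟩
  have hεsq : ε ^ 2 < 1 := by nlinarith
  have hc0 : 0 < c := lt_of_lt_of_le (by nlinarith) hdiff
  -- min is integrable
  have hminEq : (fun t => min (f₁ t) (f₂ t)) = fun t => (f₁ t + f₂ t - |f₁ t - f₂ t|) / 2 := by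
    funext t
    rcases le_total (f₁ t) (f₂ t) with h | h
    · rw [min_eq_left h, abs_of_nonpos (by linarith)]; ring
    · rw [min_eq_right h, abs_of_nonneg (by linarith)]; ring
  have hminInt : Integrable (fun t => min (f₁ t) (f₂ t)) μ := by
    rw [hminEq]; exact ((hf₁.add hf₂).sub habs).div_const 2
  -- bound on ∫ min
  have hM : (∫ t, min (f₁ t) (f₂ t) ∂μ) ≤ ε ^ 2 / 2 := by
    have hsum' : (∫ t, (f₁ t + f₂ t) ∂μ) ≤ 1 := by
      refine le_trans (le_of_eq (integral_congr_ae ?_)) hsum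
      filter_upwards [hf₁0, hf₂0] with t h1 h2
      simp only [Pi.zero_apply] at h1 h2
      rw [abs_of_nonneg (by linarith : (0:ℝ) ≤ f₁ t + f₂ t)]
    have : (∫ t, min (f₁ t) (f₂ t) ∂μ)
        = ((∫ t, (f₁ t + f₂ t) ∂μ) - c) / 2 := by
      rw [hminEq]
      have hadd : Integrable (fun t => f₁ t + f₂ t) μ := hf₁.add hf₂
      rw [integral_div, integral_sub hadd habs]
    rw [this]
    linarith
  -- the positive parts
  have hpos1 : Integrable (fun t => max (f₁ t - f₂ t) 0) μ := hsub.pos_part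
  have hpos2 : Integrable (fun t => max (f₂ t - f₁ t) 0) μ := (hf₂.sub hf₁).pos_part
  have hsum12 : (fun t => max (f₁ t - f₂ t) 0 + max (f₂ t - f₁ t) 0)
      = fun t => |f₁ t - f₂ t| := by
    funext t
    rcases le_total (f₁ t) (f₂ t) with h | h
    · rw [abs_of_nonpos (by linarith), max_eq_right (by linarith),
        max_eq_left (by linarith)]; ring
    · rw [abs_of_nonneg (by linarith), max_eq_left (by linarith),
        max_eq_right (by linarith)]; ring
  have hII : (∫ t, max (f₁ t - f₂ t) 0 ∂μ) + (∫ t, max (f₂ t - f₁ t) 0 ∂μ) = c := by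
    rw [← integral_add hpos1 hpos2]
    exact integral_congr_ae (Filter.Eventually.of_forall fun t => congrFun hsum12 t)
  have hI1n : (0:ℝ) ≤ ∫ t, max (f₁ t - f₂ t) 0 ∂μ :=
    integral_nonneg fun t => le_max_right _ _
  have hI2n : (0:ℝ) ≤ ∫ t, max (f₂ t - f₁ t) 0 ∂μ :=
    integral_nonneg fun t => le_max_right _ _
  refine ⟨fun t => max (f₁ t - f₂ t) 0 / c, fun t => max (f₂ t - f₁ t) 0 / c,
    hpos1.div_const c, hpos2.div_const c,
    Filter.Eventually.of_forall fun t => div_nonneg (le_max_right _ _) hc0.le,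
    Filter.Eventually.of_forall fun t => div_nonneg (le_max_right _ _) hc0.le,
    Filter.Eventually.of_forall fun t => ?_, ?_, ?_, ?_⟩
  · -- disjoint supports
    show max (f₁ t - f₂ t) 0 / c * (max (f₂ t - f₁ t) 0 / c) = (0 : α → ℝ) t
    simp only [Pi.zero_apply]
    rcases le_total (f₁ t) (f₂ t) with h | h
    · rw [max_eq_right (by linarith : f₁ t - f₂ t ≤ 0)]; simp
    · rw [max_eq_right (by linarith : f₂ t - f₁ t ≤ 0)]; simp
  · -- norm one
    show (∫ t, |max (f₁ t - f₂ t) 0 / c + max (f₂ t - f₁ t) 0 / c| ∂μ) = 1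
    have : (fun t => |max (f₁ t - f₂ t) 0 / c + max (f₂ t - f₁ t) 0 / c|)
        = fun t => |f₁ t - f₂ t| / c := by
      funext t
      rw [← add_div, congrFun hsum12 t,
        abs_of_nonneg (div_nonneg (abs_nonneg _) hc0.le)]
    rw [this, integral_div, div_self hc0.ne']
  · exact aux_err μ f₁ f₂ hf₁ hf₂ hf₁0 hf₂0 c ε hc0 hc1 (by linarith) hminInt hM hdiff hε0 hε
  · refine aux_err μ f₂ f₁ hf₂ hf₁ hf₂0 hf₁0 c ε hc0 hc1 (by linarith) ?_ ?_ hdiff hε0 hε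
    · simpa [min_comm] using hminInt
    · calc (∫ t, min (f₂ t) (f₁ t) ∂μ) = ∫ t, min (f₁ t) (f₂ t) ∂μ := by
            simp [min_comm]
        _ ≤ ε ^ 2 / 2 := hM
end

section
/- Let f₁, f₂ ∈ L₁(μ) be nonnegative with ‖f₁ + f₂‖₁ ≤ 1 and 1 - ε² ≤ ‖f₁ - f₂‖₁ for some 0 < ε < 1/5. With G₁ = {f₁ - f₂ > (1-ε)(f₁+f₂)} and G₂ = {f₂ - f₁ > (1-ε)(f₁+f₂)}, one has ‖f₁·χ_{G₁} + f₂·χ_{G₂}‖₁ ≥ 1 - ε² - 4ε > 1 - 5ε > 0. -/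
open MeasureTheory Set

/-! Pointwise, `|f₁ - f₂| ≤ ε·|f₁χ_{G₁} + f₂χ_{G₂}| + (1 - ε)(f₁ + f₂)`: off `G₁ ∪ G₂` this is the
definition of the sets, and on `G₁` (resp. `G₂`) it reduces to `f₂ ≥ 0` (resp. `f₁ ≥ 0`).
Integrating gives `1 - ε² ≤ ε‖f₁χ_{G₁} + f₂χ_{G₂}‖₁ + (1 - ε)`, i.e. the norm is at least `1 - ε`. -/

lemma abs_sub_le_mul_abs_ite_add_ite {a b ε : ℝ} (ha : 0 ≤ a) (hb : 0 ≤ b) (hε : ε ≤ 1) :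
    |a - b| ≤ ε * |(if (1 - ε) * (a + b) < a - b then a else 0)
        + (if (1 - ε) * (a + b) < b - a then b else 0)| + (1 - ε) * (a + b) := by
  have hab : 0 ≤ (1 - ε) * (a + b) := mul_nonneg (by linarith) (by linarith)
  split_ifs with h₁ h₂ h₂
  · linarith
  · rw [add_zero, abs_of_nonneg ha, abs_of_pos (by linarith)]
    nlinarith
  · rw [zero_add, abs_of_nonneg hb, abs_of_neg (by linarith)]
    nlinarith
  · rw [add_zero, abs_zero, mul_zero, zero_add, abs_le]
    constructor <;> linarith

section

variable {α : Type*} [MeasurableSpace α] {μ : Measure α} {f₁ f₂ : α → ℝ} {ε : ℝ}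

lemma integrable_indicator_add_indicator (hf₁ : Integrable f₁ μ) (hf₂ : Integrable f₂ μ)
    (c : ℝ) :
    Integrable (fun t => indicator {t | c * (f₁ t + f₂ t) < f₁ t - f₂ t} f₁ t
      + indicator {t | c * (f₁ t + f₂ t) < f₂ t - f₁ t} f₂ t) μ := by
  have hc : AEMeasurable (fun t => c * (f₁ t + f₂ t)) μ :=
    (hf₁.add hf₂).aemeasurable.const_mul c
  exact (hf₁.indicator₀ (nullMeasurableSet_lt hc (hf₁.sub hf₂).aemeasurable)).add
    (hf₂.indicator₀ (nullMeasurableSet_lt hc (hf₂.sub hf₁).aemeasurable))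

lemma integral_abs_sub_le (hf₁ : Integrable f₁ μ) (hf₂ : Integrable f₂ μ)
    (hf₁0 : 0 ≤ᵐ[μ] f₁) (hf₂0 : 0 ≤ᵐ[μ] f₂) (hε : ε ≤ 1) :
    ∫ t, |f₁ t - f₂ t| ∂μ
      ≤ ε * ∫ t, |indicator {t | (1 - ε) * (f₁ t + f₂ t) < f₁ t - f₂ t} f₁ t
          + indicator {t | (1 - ε) * (f₁ t + f₂ t) < f₂ t - f₁ t} f₂ t| ∂μ
        + (1 - ε) * ∫ t, |f₁ t + f₂ t| ∂μ := by
  have hA := (integrable_indicator_add_indicator hf₁ hf₂ (1 - ε)).abs.const_mul ε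
  have hS : Integrable (fun t => (1 - ε) * |f₁ t + f₂ t|) μ := (hf₁.add hf₂).abs.const_mul _
  rw [← integral_const_mul, ← integral_const_mul, ← integral_add hA hS]
  refine integral_mono_ae (hf₁.sub hf₂).abs (hA.add hS) ?_
  filter_upwards [hf₁0, hf₂0] with t h₁ h₂
  simpa only [indicator_apply, mem_ofPred_eq, abs_of_nonneg (add_nonneg h₁ h₂)]
    using abs_sub_le_mul_abs_ite_add_ite h₁ h₂ hε

lemma one_sub_le_integral_abs_indicator_add_indicator (hf₁ : Integrable f₁ μ)
    (hf₂ : Integrable f₂ μ) (hf₁0 : 0 ≤ᵐ[μ] f₁) (hf₂0 : 0 ≤ᵐ[μ] f₂) (hε0 : 0 < ε) (hε : ε ≤ 1)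
    (hsum : ∫ t, |f₁ t + f₂ t| ∂μ ≤ 1) (hdiff : 1 - ε ^ 2 ≤ ∫ t, |f₁ t - f₂ t| ∂μ) :
    1 - ε ≤ ∫ t, |indicator {t | (1 - ε) * (f₁ t + f₂ t) < f₁ t - f₂ t} f₁ t
        + indicator {t | (1 - ε) * (f₁ t + f₂ t) < f₂ t - f₁ t} f₂ t| ∂μ := by
  have h := integral_abs_sub_le hf₁ hf₂ hf₁0 hf₂0 hε
  have hS : (1 - ε) * ∫ t, |f₁ t + f₂ t| ∂μ ≤ 1 - ε := by
    simpa using mul_le_mul_of_nonneg_left hsum (sub_nonneg.2 hε)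
  refine le_of_mul_le_mul_left ?_ hε0
  nlinarith

end

/-- With `G₁ = {f₁ - f₂ > (1-ε)(f₁+f₂)}`, `G₂ = {f₂ - f₁ > (1-ε)(f₁+f₂)}`, nonnegative
`f₁, f₂ ∈ L₁(μ)`, `‖f₁+f₂‖₁ ≤ 1` and `1 - ε² ≤ ‖f₁-f₂‖₁`, one has
`‖f₁·χ_{G₁} + f₂·χ_{G₂}‖₁ ≥ 1 - ε² - 4ε > 1 - 5ε > 0`. -/
theorem norm_restricted_sum_large
    {α : Type*} [MeasurableSpace α] (μ : Measure α)
    (f₁ f₂ : α → ℝ) (hf₁ : Integrable f₁ μ) (hf₂ : Integrable f₂ μ)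
    (hf₁0 : 0 ≤ᵐ[μ] f₁) (hf₂0 : 0 ≤ᵐ[μ] f₂)
    (ε : ℝ) (hε0 : 0 < ε) (hε : ε < 1/5)
    (hsum : ∫ t, |f₁ t + f₂ t| ∂μ ≤ 1)
    (hdiff : 1 - ε ^ 2 ≤ ∫ t, |f₁ t - f₂ t| ∂μ) :
    (∫ t, |indicator {t | (1 - ε) * (f₁ t + f₂ t) < f₁ t - f₂ t} f₁ t
        + indicator {t | (1 - ε) * (f₁ t + f₂ t) < f₂ t - f₁ t} f₂ t| ∂μ)
      ≥ 1 - ε ^ 2 - 4 * ε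
    ∧ 1 - ε ^ 2 - 4 * ε > 1 - 5 * ε ∧ 1 - 5 * ε > 0 := by
  have h := one_sub_le_integral_abs_indicator_add_indicator hf₁ hf₂ hf₁0 hf₂0 hε0
    (by linarith) hsum hdiff
  refine ⟨?_, ?_, ?_⟩ <;> nlinarith
end

section
/- Let f₁, f₂ ∈ L₁(μ) be nonnegative with ‖f₁ + f₂‖₁ ≤ 1 and 1 - ε² ≤ ‖f₁ - f₂‖₁ for 0 < ε < 1/5, and let G₁, G₂ be as in the disjointification lemma. Then ‖f₁ - f₁·χ_{G₁}‖₁ ≤ 2ε and ‖f₂ - f₂·χ_{G₂}‖₁ ≤ 2ε. -/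
open MeasureTheory Set

private lemma aux_one
    {α : Type*} [MeasurableSpace α] (μ : Measure α)
    (f₁ f₂ : α → ℝ) (hm₁ : StronglyMeasurable f₁) (hm₂ : StronglyMeasurable f₂)
    (hf₁ : Integrable f₁ μ) (hf₂ : Integrable f₂ μ)
    (hf₁0 : 0 ≤ᵐ[μ] f₁) (hf₂0 : 0 ≤ᵐ[μ] f₂)
    (ε : ℝ) (hε0 : 0 < ε) (hε : ε < 1/5)
    (hsum : ∫ t, |f₁ t + f₂ t| ∂μ ≤ 1)
    (hdiff : 1 - ε ^ 2 ≤ ∫ t, |f₁ t - f₂ t| ∂μ) :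
    (∫ t, |f₁ t - indicator {t | (1 - ε) * (f₁ t + f₂ t) < f₁ t - f₂ t} f₁ t| ∂μ) ≤ 2 * ε := by
  set G₁ : Set α := {t | (1 - ε) * (f₁ t + f₂ t) < f₁ t - f₂ t} with hG₁
  set G₂ : Set α := {t | (1 - ε) * (f₁ t + f₂ t) < f₂ t - f₁ t} with hG₂
  have m₁ : Measurable f₁ := hm₁.measurable
  have m₂ : Measurable f₂ := hm₂.measurable
  have mG₁ : MeasurableSet G₁ :=
    measurableSet_lt (by measurability) (by measurability)
  have mG₂ : MeasurableSet G₂ :=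
    measurableSet_lt (by measurability) (by measurability)
  set S : Set α := G₁ ∪ G₂ with hS
  have mS : MeasurableSet S := mG₁.union mG₂
  have hintS : Integrable (fun t => f₁ t + f₂ t) μ := hf₁.add hf₂
  have hiSc : Integrable (Sᶜ.indicator (fun t => f₁ t + f₂ t)) μ :=
    hintS.indicator mS.compl
  have hiG₂ : Integrable (G₂.indicator f₁) μ := hf₁.indicator mG₂
  -- ∫ (f₁ + f₂) ≤ 1
  have hsum' : ∫ t, (f₁ t + f₂ t) ∂μ ≤ 1 := by
    refine le_trans (le_of_eq ?_) hsum
    refine integral_congr_ae ?_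
    filter_upwards [hf₁0, hf₂0] with t h1 h2
    simp only [Pi.zero_apply] at h1 h2
    exact (abs_of_nonneg (by linarith)).symm
  -- Step 3 : ∫ 1_{Sᶜ}(f₁+f₂) ≤ ε
  have h3 : ∫ t, Sᶜ.indicator (fun t => f₁ t + f₂ t) t ∂μ ≤ ε := by
    have key : ∀ᵐ t ∂μ, |f₁ t - f₂ t| ≤
        (f₁ t + f₂ t) - ε * Sᶜ.indicator (fun t => f₁ t + f₂ t) t := by
      filter_upwards [hf₁0, hf₂0] with t h1 h2
      simp only [Pi.zero_apply] at h1 h2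
      by_cases ht : t ∈ S
      · rw [Set.indicator_of_notMem (by simpa using ht)]
        rw [abs_le]; constructor <;> nlinarith
      · have ht1 : t ∉ G₁ := fun h => ht (Or.inl h)
        have ht2 : t ∉ G₂ := fun h => ht (Or.inr h)
        rw [Set.indicator_of_mem (by simpa using ht)]
        have e1 : ¬ ((1 - ε) * (f₁ t + f₂ t) < f₁ t - f₂ t) := ht1
        have e2 : ¬ ((1 - ε) * (f₁ t + f₂ t) < f₂ t - f₁ t) := ht2
        push_neg at e1 e2
        rw [abs_le]; constructor <;> nlinarith
    have hmono : ∫ t, |f₁ t - f₂ t| ∂μ ≤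
        ∫ t, ((f₁ t + f₂ t) - ε * Sᶜ.indicator (fun t => f₁ t + f₂ t) t) ∂μ :=
      integral_mono_ae (hf₁.sub hf₂).abs (hintS.sub (hiSc.const_mul ε)) key
    rw [integral_sub hintS (hiSc.const_mul ε), integral_const_mul ε] at hmono
    nlinarith
  -- Step 2 : ∫ 1_{G₂} f₁ ≤ ε
  have h2 : ∫ t, G₂.indicator f₁ t ∂μ ≤ ε := by
    have key : ∀ᵐ t ∂μ, G₂.indicator f₁ t ≤ ε * f₂ t := by
      filter_upwards [hf₁0, hf₂0] with t h1 h2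
      simp only [Pi.zero_apply] at h1 h2
      by_cases ht : t ∈ G₂
      · rw [Set.indicator_of_mem ht]
        have hht : (1 - ε) * (f₁ t + f₂ t) < f₂ t - f₁ t := ht
        nlinarith [mul_nonneg (by linarith : (0:ℝ) ≤ 1 - ε) h1]
      · rw [Set.indicator_of_notMem ht]; exact mul_nonneg hε0.le h2
    have hmono : ∫ t, G₂.indicator f₁ t ∂μ ≤ ∫ t, ε * f₂ t ∂μ :=
      integral_mono_ae hiG₂ (hf₂.const_mul ε) key
    rw [integral_const_mul ε] at hmono
    have hf₂le : ∫ t, f₂ t ∂μ ≤ 1 := by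
      refine le_trans ?_ hsum'
      refine integral_mono_ae hf₂ hintS ?_
      filter_upwards [hf₁0] with t h1
      simp only [Pi.zero_apply] at h1; linarith
    calc ∫ t, G₂.indicator f₁ t ∂μ ≤ ε * ∫ t, f₂ t ∂μ := hmono
      _ ≤ ε * 1 := by
          apply mul_le_mul_of_nonneg_left hf₂le hε0.le
      _ = ε := mul_one ε
  -- Combine
  have key : ∀ᵐ t ∂μ, |f₁ t - G₁.indicator f₁ t| ≤
      Sᶜ.indicator (fun t => f₁ t + f₂ t) t + G₂.indicator f₁ t := by
    filter_upwards [hf₁0, hf₂0] with t h1 h2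
    simp only [Pi.zero_apply] at h1 h2
    by_cases ht1 : t ∈ G₁
    · rw [Set.indicator_of_mem ht1, sub_self, abs_zero]
      have hx : 0 ≤ Sᶜ.indicator (fun t => f₁ t + f₂ t) t := by
        by_cases h : t ∈ Sᶜ
        · rw [Set.indicator_of_mem h]; linarith
        · rw [Set.indicator_of_notMem h]
      have hy : 0 ≤ G₂.indicator f₁ t := by
        by_cases h : t ∈ G₂
        · rw [Set.indicator_of_mem h]; exact h1
        · rw [Set.indicator_of_notMem h]
      linarith
    · rw [Set.indicator_of_notMem ht1, sub_zero, abs_of_nonneg h1]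
      by_cases ht2 : t ∈ G₂
      · have hx : 0 ≤ Sᶜ.indicator (fun t => f₁ t + f₂ t) t := by
          by_cases h : t ∈ Sᶜ
          · rw [Set.indicator_of_mem h]; linarith
          · rw [Set.indicator_of_notMem h]
        rw [Set.indicator_of_mem ht2]; linarith
      · have htS : t ∈ Sᶜ := by
          simp only [Set.mem_compl_iff, hS, Set.mem_union]
          tauto
        rw [Set.indicator_of_mem htS, Set.indicator_of_notMem ht2]
        linarith
  have hmono : ∫ t, |f₁ t - G₁.indicator f₁ t| ∂μ ≤
      ∫ t, (Sᶜ.indicator (fun t => f₁ t + f₂ t) t + G₂.indicator f₁ t) ∂μ :=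
    integral_mono_ae (hf₁.sub (hf₁.indicator mG₁)).abs (hiSc.add hiG₂) key
  rw [integral_add hiSc hiG₂] at hmono
  linarith

/-- With `G₁ = {f₁ - f₂ > (1-ε)(f₁+f₂)}`, `G₂ = {f₂ - f₁ > (1-ε)(f₁+f₂)}`, nonnegative
`f₁, f₂ ∈ L₁(μ)`, `‖f₁+f₂‖₁ ≤ 1` and `1 - ε² ≤ ‖f₁-f₂‖₁`, one has
`‖f₁ - f₁·χ_{G₁}‖₁ ≤ 2ε` and `‖f₂ - f₂·χ_{G₂}‖₁ ≤ 2ε`. -/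
theorem norm_sub_indicator_small
    {α : Type*} [MeasurableSpace α] (μ : Measure α)
    (f₁ f₂ : α → ℝ) (hf₁ : Integrable f₁ μ) (hf₂ : Integrable f₂ μ)
    (hf₁0 : 0 ≤ᵐ[μ] f₁) (hf₂0 : 0 ≤ᵐ[μ] f₂)
    (ε : ℝ) (hε0 : 0 < ε) (hε : ε < 1/5)
    (hsum : ∫ t, |f₁ t + f₂ t| ∂μ ≤ 1)
    (hdiff : 1 - ε ^ 2 ≤ ∫ t, |f₁ t - f₂ t| ∂μ) :
    (∫ t, |f₁ t - indicator {t | (1 - ε) * (f₁ t + f₂ t) < f₁ t - f₂ t} f₁ t| ∂μ) ≤ 2 * ε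
    ∧ (∫ t, |f₂ t - indicator {t | (1 - ε) * (f₁ t + f₂ t) < f₂ t - f₁ t} f₂ t| ∂μ) ≤ 2 * ε := by

  set g₁ := hf₁.1.mk f₁ with hg₁def
  set g₂ := hf₂.1.mk f₂ with hg₂def
  have hm₁ : StronglyMeasurable g₁ := hf₁.1.stronglyMeasurable_mk
  have hm₂ : StronglyMeasurable g₂ := hf₂.1.stronglyMeasurable_mk
  have he₁ : f₁ =ᵐ[μ] g₁ := hf₁.1.ae_eq_mk
  have he₂ : f₂ =ᵐ[μ] g₂ := hf₂.1.ae_eq_mk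
  have hg₁ : Integrable g₁ μ := hf₁.congr he₁
  have hg₂ : Integrable g₂ μ := hf₂.congr he₂
  have hg₁0 : 0 ≤ᵐ[μ] g₁ := by
    filter_upwards [hf₁0, he₁] with t h e; rw [← e]; exact h
  have hg₂0 : 0 ≤ᵐ[μ] g₂ := by
    filter_upwards [hf₂0, he₂] with t h e; rw [← e]; exact h
  have hgsum : ∫ t, |g₁ t + g₂ t| ∂μ ≤ 1 := by
    refine le_trans (le_of_eq ?_) hsum
    refine integral_congr_ae ?_
    filter_upwards [he₁, he₂] with t e1 e2; rw [e1, e2]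
  have hgdiff : 1 - ε ^ 2 ≤ ∫ t, |g₁ t - g₂ t| ∂μ := by
    refine le_trans hdiff (le_of_eq ?_)
    refine integral_congr_ae ?_
    filter_upwards [he₁, he₂] with t e1 e2; rw [e1, e2]
  have hgsum' : ∫ t, |g₂ t + g₁ t| ∂μ ≤ 1 := by
    refine le_trans (le_of_eq ?_) hgsum
    refine integral_congr_ae ?_
    exact Filter.Eventually.of_forall fun t => by simp [add_comm]
  have hgdiff' : 1 - ε ^ 2 ≤ ∫ t, |g₂ t - g₁ t| ∂μ := by
    refine le_trans hgdiff (le_of_eq ?_)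
    refine integral_congr_ae ?_
    exact Filter.Eventually.of_forall fun t => by simp [abs_sub_comm]
  have A := aux_one μ g₁ g₂ hm₁ hm₂ hg₁ hg₂ hg₁0 hg₂0 ε hε0 hε hgsum hgdiff
  have B := aux_one μ g₂ g₁ hm₂ hm₁ hg₂ hg₁ hg₂0 hg₁0 ε hε0 hε hgsum' hgdiff'
  constructor
  · refine le_trans (le_of_eq ?_) A
    refine integral_congr_ae ?_
    filter_upwards [he₁, he₂] with t e1 e2
    simp only [Set.indicator_apply, Set.mem_setOf_eq, e1, e2]
  · refine le_trans (le_of_eq ?_) B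
    refine integral_congr_ae ?_
    filter_upwards [he₁, he₂] with t e1 e2
    simp only [Set.indicator_apply, Set.mem_setOf_eq, e1, e2, add_comm]
end

section
/- Let S : L∞(μ) → L₁(ν) be a positive linear operator of norm 1, let f₀ ∈ L∞(μ) with ‖f₀‖∞ = 1, 0 < η < 1, and suppose ‖S(f₀)‖₁ > 1 - η². Let C = {t : |f₀(t)| ≤ 1 - η}. Then ‖S(χ_C)‖₁ ≤ η, and consequently ‖S(f·χ_C)‖₁ ≤ η for every f in the closed unit ball of L∞(μ). -/
open MeasureTheory Set
open scoped ENNReal NNReal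

private lemma aux_norm_eq_integral {β : Type*} [MeasurableSpace β] {ν : Measure β}
    (h : Lp ℝ 1 ν) (hh : 0 ≤ h) : ‖h‖ = ∫ x, h x ∂ν := by
  rw [L1.norm_eq_integral_norm]
  refine integral_congr_ae ?_
  filter_upwards [(Lp.coeFn_nonneg h).mpr hh] with x hx
  exact Real.norm_of_nonneg hx

private lemma aux_ae_le {α : Type*} [MeasurableSpace α] {μ : Measure α}
    (f : Lp ℝ ⊤ μ) : ∀ᵐ x ∂μ, |f x| ≤ ‖f‖ := by
  filter_upwards [ae_le_eLpNormEssSup (f := ⇑f) (μ := μ)] with x hx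
  rw [Lp.norm_def, eLpNorm_exponent_top, ← Real.norm_eq_abs]
  calc ‖f x‖ = ((‖f x‖₊ : ℝ≥0∞)).toReal := by simp
    _ ≤ _ := ENNReal.toReal_mono
        (by rw [← eLpNorm_exponent_top]; exact Lp.eLpNorm_ne_top f) hx

/-- Let `S : L∞(μ) → L₁(ν)` be a positive operator of norm one, `f₀ ∈ L∞(μ)` of norm one,
`0 < η < 1` with `‖S f₀‖₁ > 1 - η²`, and `C = {t : |f₀ t| ≤ 1 - η}`.  Then `‖S(χ_C)‖₁ ≤ η`
and consequently `‖S(f·χ_C)‖₁ ≤ η` for every `f` in the closed unit ball of `L∞(μ)`. -/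
theorem norm_image_indicator_C_small
    {α β : Type*} [MeasurableSpace α] [MeasurableSpace β]
    (μ : Measure α) (ν : Measure β)
    (S : Lp ℝ ⊤ μ →L[ℝ] Lp ℝ 1 ν)
    (hSpos : ∀ f : Lp ℝ ⊤ μ, 0 ≤ f → 0 ≤ S f) (hSnorm : ‖S‖ = 1)
    (f₀ : Lp ℝ ⊤ μ) (hf₀ : ‖f₀‖ = 1)
    (η : ℝ) (hη0 : 0 < η) (hη1 : η < 1)
    (hS : ‖S f₀‖ > 1 - η ^ 2) :
    (∀ g : Lp ℝ ⊤ μ,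
        (g : α → ℝ) =ᵐ[μ] indicator {t | |f₀ t| ≤ 1 - η} (fun _ => (1 : ℝ)) → ‖S g‖ ≤ η)
    ∧ ∀ f g : Lp ℝ ⊤ μ, ‖f‖ ≤ 1 →
        (g : α → ℝ) =ᵐ[μ] indicator {t | |f₀ t| ≤ 1 - η} (fun t => f t) → ‖S g‖ ≤ η := by
  set C : Set α := {t | |f₀ t| ≤ 1 - η} with hC
  -- monotonicity of S
  have Smono : ∀ a b : Lp ℝ ⊤ μ, a ≤ b → S a ≤ S b := fun a b hab =>
    sub_nonneg.1 (by rw [← map_sub]; exact hSpos _ (sub_nonneg.2 hab))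
  -- the constant function 1 in L∞
  have oneMem : MemLp (fun _ : α => (1 : ℝ)) ⊤ μ :=
    memLp_top_of_bound aestronglyMeasurable_const 1
      (Filter.Eventually.of_forall fun _ => by simp)
  set e₁ : Lp ℝ ⊤ μ := oneMem.toLp _ with he₁
  have he₁norm : ‖e₁‖ ≤ 1 := by
    rw [he₁, Lp.norm_toLp]
    have h := eLpNorm_le_of_ae_bound (μ := μ) (p := (⊤ : ℝ≥0∞))
      (f := fun _ : α => (1 : ℝ)) (C := 1)
      (Filter.Eventually.of_forall fun _ => by simp)
    simp only [ENNReal.toReal_top, inv_zero, ENNReal.rpow_zero, one_mul,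
      ENNReal.ofReal_one] at h
    exact ENNReal.toReal_le_of_le_ofReal zero_le_one (by simpa using h)
  have hf₀le : ∀ᵐ x ∂μ, |f₀ x| ≤ 1 := by
    have := aux_ae_le f₀
    rw [hf₀] at this
    exact this
  -- first part
  have key : ∀ g : Lp ℝ ⊤ μ,
      (g : α → ℝ) =ᵐ[μ] indicator C (fun _ => (1 : ℝ)) → ‖S g‖ ≤ η := by
    intro g hgc
    have hg0 : 0 ≤ g := by
      rw [← Lp.coeFn_nonneg]
      filter_upwards [hgc] with x hx
      rw [Pi.zero_apply, hx]
      exact indicator_nonneg (fun _ _ => zero_le_one) x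
    have hSg0 : 0 ≤ S g := hSpos g hg0
    -- 0 ≤ e₁ - |f₀| - η • g
    have hord : |f₀| + η • g ≤ e₁ := by
      rw [← sub_nonneg, ← Lp.coeFn_nonneg]
      filter_upwards [Lp.coeFn_sub e₁ (|f₀| + η • g), Lp.coeFn_add |f₀| (η • g),
        Lp.coeFn_smul η g, Lp.coeFn_abs f₀, oneMem.coeFn_toLp, hgc, hf₀le]
        with x h1 h2 h3 h4 h5 h6 h7
      rw [Pi.zero_apply, h1, Pi.sub_apply, h2, Pi.add_apply, h3, Pi.smul_apply,
        smul_eq_mul, h4, h5, h6]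
      by_cases hx : x ∈ C
      · rw [indicator_of_mem hx]
        have : |f₀ x| ≤ 1 - η := hx
        linarith
      · rw [indicator_of_notMem hx]
        linarith
    have hordS : S |f₀| + η • S g ≤ S e₁ := by
      have := Smono _ _ hord
      rwa [map_add, S.map_smul] at this
    -- pass to integrals
    have hint : (∫ x, (S |f₀|) x ∂ν) + η * ∫ x, (S g) x ∂ν ≤ ∫ x, (S e₁) x ∂ν := by
      have hle : ∀ᵐ x ∂ν, (S |f₀|) x + η * (S g) x ≤ (S e₁) x := by
        filter_upwards [(Lp.coeFn_le _ _).mpr hordS,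
          Lp.coeFn_add (S |f₀|) (η • S g), Lp.coeFn_smul η (S g)] with x h1 h2 h3
        calc (S |f₀|) x + η * (S g) x = (S |f₀| + η • S g) x := by
              rw [h2, Pi.add_apply, h3, Pi.smul_apply, smul_eq_mul]
          _ ≤ _ := h1
      have hI1 : Integrable (fun x => (S |f₀|) x + η * (S g) x) ν :=
        (L1.integrable_coeFn _).add ((L1.integrable_coeFn _).const_mul η)
      calc (∫ x, (S |f₀|) x ∂ν) + η * ∫ x, (S g) x ∂ν
          = ∫ x, (S |f₀|) x + η * (S g) x ∂ν := by
            rw [integral_add (L1.integrable_coeFn _) ((L1.integrable_coeFn _).const_mul η),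
              integral_const_mul]
        _ ≤ _ := integral_mono_ae hI1 (L1.integrable_coeFn _) hle
    have hE : ∫ x, (S e₁) x ∂ν ≤ 1 := by
      calc ∫ x, (S e₁) x ∂ν ≤ ‖∫ x, (S e₁) x ∂ν‖ := le_abs_self _
        _ ≤ ∫ x, ‖(S e₁) x‖ ∂ν := norm_integral_le_integral_norm _
        _ = ‖S e₁‖ := (L1.norm_eq_integral_norm _).symm
        _ ≤ ‖S‖ * ‖e₁‖ := S.le_opNorm e₁
        _ ≤ 1 := by rw [hSnorm, one_mul]; exact he₁norm
    have hA : ‖S f₀‖ ≤ ∫ x, (S |f₀|) x ∂ν := by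
      have hA0 : 0 ≤ S |f₀| := hSpos _ (abs_nonneg f₀)
      have habs : |S f₀| ≤ |(S |f₀|)| := by
        rw [abs_of_nonneg hA0, abs_le']
        refine ⟨Smono _ _ (le_abs_self f₀), ?_⟩
        have hnal : -|f₀| ≤ f₀ := by
          have h := neg_le_neg (neg_le_abs f₀)
          rwa [neg_neg] at h
        have h1 := Smono _ _ hnal
        rw [map_neg] at h1
        have h2 := neg_le_neg h1
        rwa [neg_neg] at h2
      calc ‖S f₀‖ ≤ ‖S |f₀|‖ := norm_le_norm_of_abs_le_abs habs
        _ = _ := aux_norm_eq_integral _ hA0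
    have hB : ‖S g‖ = ∫ x, (S g) x ∂ν := aux_norm_eq_integral _ hSg0
    nlinarith [hS, hη0.le]
  refine ⟨key, ?_⟩
  -- second part
  intro f g hf hgc
  -- build χ_C as an element of L∞
  have hCmeas : MeasurableSet C :=
    measurableSet_le ((Lp.stronglyMeasurable f₀).measurable.abs) measurable_const
  have chiMem : MemLp (indicator C fun _ : α => (1 : ℝ)) ⊤ μ := by
    refine memLp_top_of_bound
      ((stronglyMeasurable_const.indicator hCmeas).aestronglyMeasurable) 1
      (Filter.Eventually.of_forall fun x => ?_)
    by_cases hx : x ∈ C <;> simp [indicator_of_mem, indicator_of_notMem, hx]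
  set χ : Lp ℝ ⊤ μ := chiMem.toLp _ with hχ
  have hχc : (χ : α → ℝ) =ᵐ[μ] indicator C (fun _ => (1 : ℝ)) := chiMem.coeFn_toLp
  have hχle : ‖S χ‖ ≤ η := key χ hχc
  -- |g| ≤ χ
  have hfael : ∀ᵐ x ∂μ, |f x| ≤ 1 := by
    filter_upwards [aux_ae_le f] with x hx
    exact hx.trans hf
  have habsg : |g| ≤ χ := by
    rw [← Lp.coeFn_le]
    filter_upwards [Lp.coeFn_abs g, hgc, hχc, hfael] with x h1 h2 h3 h4
    rw [h1, h2, h3]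
    by_cases hx : x ∈ C
    · rw [indicator_of_mem hx, indicator_of_mem hx]; exact h4
    · rw [indicator_of_notMem hx, indicator_of_notMem hx, abs_zero]
  have hχ0 : 0 ≤ χ := by
    rw [← Lp.coeFn_nonneg]
    filter_upwards [hχc] with x hx
    rw [Pi.zero_apply, hx]
    exact indicator_nonneg (fun _ _ => zero_le_one) x
  have habsS : |S g| ≤ |S χ| := by
    rw [abs_of_nonneg (hSpos _ hχ0), abs_le']
    obtain ⟨h1, h2⟩ := abs_le'.mp habsg
    refine ⟨Smono _ _ h1, ?_⟩
    have h3 := Smono _ _ h2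
    rwa [map_neg] at h3
  exact (norm_le_norm_of_abs_le_abs habsS).trans hχle
end

section
/- Let S : L∞(μ) → L₁(ν) be a positive operator of norm 1, f₀ ∈ S_{L∞(μ)}, 0 < η < 1 with ‖S(f₀)‖₁ > 1 - η². With A = {-1 ≤ f₀ < -1+η}, B = {1-η < f₀ ≤ 1}, C = {|f₀| ≤ 1-η}, one has ‖S(χ_B - χ_A)‖₁ ≥ 1 - 4η. -/
open MeasureTheory Set

set_option maxHeartbeats 1600000 in
/-- Let `S : L∞(μ) → L₁(ν)` be a positive operator of norm one, `f₀` of norm one, `0 < η < 1`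
with `‖S f₀‖₁ > 1 - η²`.  With `A = {-1 ≤ f₀ < -1+η}` and `B = {1-η < f₀ ≤ 1}`, every
`h ∈ L∞(μ)` representing `χ_B - χ_A` satisfies `‖S h‖₁ ≥ 1 - 4η`. -/
theorem norm_image_chiB_sub_chiA_large
    {α β : Type*} [MeasurableSpace α] [MeasurableSpace β]
    (μ : Measure α) (ν : Measure β)
    (S : Lp ℝ ⊤ μ →L[ℝ] Lp ℝ 1 ν)
    (hSpos : ∀ f : Lp ℝ ⊤ μ, 0 ≤ f → 0 ≤ S f) (hSnorm : ‖S‖ = 1)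
    (f₀ : Lp ℝ ⊤ μ) (hf₀ : ‖f₀‖ = 1)
    (η : ℝ) (hη0 : 0 < η) (hη1 : η < 1)
    (hS : ‖S f₀‖ > 1 - η ^ 2) :
    ∀ h : Lp ℝ ⊤ μ,
      (h : α → ℝ) =ᵐ[μ]
        (fun t => indicator {t | 1 - η < f₀ t ∧ f₀ t ≤ 1} (fun _ => (1 : ℝ)) t
          - indicator {t | -1 ≤ f₀ t ∧ f₀ t < -1 + η} (fun _ => (1 : ℝ)) t) →
      1 - 4 * η ≤ ‖S h‖ := by
  intro h hh
  -- `S` is monotone and dominated by its action on absolute values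
  have hSmono : ∀ a b : Lp ℝ ⊤ μ, a ≤ b → S a ≤ S b := by
    intro a b hab
    have := hSpos (b - a) (sub_nonneg.mpr hab)
    rw [map_sub] at this
    exact sub_nonneg.mp this
  have habs : ∀ g : Lp ℝ ⊤ μ, |S g| ≤ S |g| := by
    intro g
    have h1 : 0 ≤ S (|g| - g) := hSpos _ (sub_nonneg.mpr (le_abs_self g))
    have h2 : 0 ≤ S (|g| - -g) := hSpos _ (sub_nonneg.mpr (neg_le_abs g))
    rw [map_sub] at h1 h2
    rw [map_neg] at h2
    exact abs_le'.mpr ⟨sub_nonneg.mp h1, sub_nonneg.mp h2⟩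
  -- basic integral facts on `L¹(ν)`
  have int_norm : ∀ g : Lp ℝ 1 ν, ‖g‖ = ∫ x, |g x| ∂ν := by
    intro g; rw [L1.norm_eq_integral_norm]; simp [Real.norm_eq_abs]
  have intle : ∀ g : Lp ℝ 1 ν, ∫ x, g x ∂ν ≤ ‖g‖ := by
    intro g
    have h1 := norm_integral_le_integral_norm (μ := ν) (fun x => g x)
    rw [Real.norm_eq_abs] at h1
    simp only [Real.norm_eq_abs] at h1
    rw [int_norm g]
    exact (le_abs_self _).trans h1
  have intmono : ∀ x y : Lp ℝ 1 ν, x ≤ y → ∫ t, x t ∂ν ≤ ∫ t, y t ∂ν := fun x y hxy =>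
    integral_mono_ae (L1.integrable_coeFn x) (L1.integrable_coeFn y)
      ((Lp.coeFn_le x y).mpr hxy)
  have normle : ∀ g : Lp ℝ ⊤ μ, ‖S g‖ ≤ ∫ x, (S |g| : β → ℝ) x ∂ν := by
    intro g
    rw [int_norm]
    refine integral_mono_ae ((L1.integrable_coeFn (S g)).abs) (L1.integrable_coeFn (S |g|)) ?_
    filter_upwards [(Lp.coeFn_le _ _).mpr (habs g), Lp.coeFn_abs (S g)] with t h1 h2
    rw [← h2]; exact h1
  -- the constant-one function in `L∞(μ)`
  set one : Lp ℝ ⊤ μ := (memLp_top_const (1:ℝ)).toLp (fun _ => (1:ℝ)) with hone_def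
  have hone_coe : ⇑one =ᵐ[μ] fun _ => (1:ℝ) := MemLp.coeFn_toLp _
  have hone_norm : ‖one‖ ≤ 1 := by
    rw [hone_def, Lp.norm_toLp]
    have h : eLpNorm (fun _ : α => (1:ℝ)) ⊤ μ ≤ ENNReal.ofReal 1 := by
      rw [eLpNorm_exponent_top]
      exact eLpNormEssSup_le_of_ae_bound (C := 1) (Filter.Eventually.of_forall fun x => by simp)
    calc (eLpNorm (fun _ : α => (1:ℝ)) ⊤ μ).toReal ≤ (ENNReal.ofReal 1).toReal :=
          ENNReal.toReal_mono (by simp) h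
      _ = 1 := by simp
  have hSone : ∫ x, (S one : β → ℝ) x ∂ν ≤ 1 := by
    refine (intle _).trans ?_
    calc ‖S one‖ ≤ ‖S‖ * ‖one‖ := S.le_opNorm one
      _ ≤ 1 := by rw [hSnorm, one_mul]; exact hone_norm
  -- `|f₀| ≤ 1` almost everywhere
  have hf₀ae : ∀ᵐ t ∂μ, |f₀ t| ≤ 1 := by
    have h1 := ae_le_eLpNormEssSup (f := ⇑f₀) (μ := μ)
    have h2 : eLpNormEssSup (⇑f₀) μ = 1 := by
      have h4 : (eLpNorm (⇑f₀) ⊤ μ).toReal = 1 := by rw [← Lp.norm_def]; exact hf₀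
      rw [← eLpNorm_exponent_top]
      exact (ENNReal.toReal_eq_one_iff _).mp h4
    filter_upwards [h1] with t ht
    rw [h2] at ht
    have h3 : ‖f₀ t‖₊ ≤ 1 := by rw [enorm_eq_nnnorm] at ht; exact_mod_cast ht
    rw [← Real.norm_eq_abs, ← coe_nnnorm]
    exact_mod_cast h3
  -- the key pointwise estimates
  have key : ∀ᵐ t ∂μ, |h t| ≤ 1 ∧ |f₀ t| ≤ 1 - η * (1 - |h t|) ∧
      |f₀ t - h t| ≤ η + (1 - |h t|) := by
    filter_upwards [hh, hf₀ae] with t ht hft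
    rw [ht]
    rw [abs_le] at hft
    by_cases hB : 1 - η < f₀ t ∧ f₀ t ≤ 1
    · have hA : ¬(-1 ≤ f₀ t ∧ f₀ t < -1 + η) := by rintro ⟨-, h2⟩; linarith [hB.1]
      simp only [indicator, mem_setOf_eq, hB, hA, if_true, if_false]
      norm_num
      refine ⟨abs_le.mpr ⟨by linarith, by linarith⟩, abs_le.mpr ⟨by linarith [hB.1], by linarith [hB.2]⟩⟩
    · by_cases hA : -1 ≤ f₀ t ∧ f₀ t < -1 + η
      · simp only [indicator, mem_setOf_eq, hB, hA, if_true, if_false]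
        norm_num
        refine ⟨abs_le.mpr ⟨by linarith, by linarith⟩,
          abs_le.mpr ⟨by linarith [hA.1], by linarith [hA.2]⟩⟩
      · simp only [indicator, mem_setOf_eq, hB, hA, if_true, if_false]
        norm_num
        have h5 : f₀ t ≤ 1 - η := by
          by_contra hc
          exact hB ⟨by linarith, hft.2⟩
        have h6 : -1 + η ≤ f₀ t := by
          by_contra hc
          exact hA ⟨hft.1, by linarith⟩
        refine ⟨abs_le.mpr ⟨by linarith, by linarith⟩,
          abs_le.mpr ⟨by linarith, by linarith⟩⟩
  -- the element `w = 1 - |h|`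
  have hw_coe : ⇑(one - |h|) =ᵐ[μ] fun t => 1 - |h t| := by
    filter_upwards [Lp.coeFn_sub one |h|, Lp.coeFn_abs h, hone_coe] with t h1 h2 h3
    rw [h1, Pi.sub_apply, h2, h3]
  set c := ∫ x, (S (one - |h|) : β → ℝ) x ∂ν with hc_def
  -- Chain A : `‖S f₀‖ ≤ 1 - η c`, hence `c < η`
  have ordA : |f₀| ≤ one - η • (one - |h|) := by
    rw [← Lp.coeFn_le]
    filter_upwards [key, Lp.coeFn_abs f₀, Lp.coeFn_sub one (η • (one - |h|)),
      Lp.coeFn_smul η (one - |h|), hw_coe, hone_coe] with t hk h1 h2 h3 h4 h5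
    rw [h1, h2, Pi.sub_apply, h3, Pi.smul_apply, smul_eq_mul, h4, h5]
    exact hk.2.1
  have chainA : ‖S f₀‖ ≤ 1 - η * c := by
    refine (normle f₀).trans ?_
    refine (intmono _ _ (hSmono _ _ ordA)).trans ?_
    have expand : S (one - η • (one - |h|)) = S one - η • S (one - |h|) := by
      rw [map_sub, S.map_smul]
    rw [expand]
    have hae : ⇑(S one - η • S (one - |h|)) =ᵐ[ν]
        fun x => (S one : β → ℝ) x - η * (S (one - |h|) : β → ℝ) x := by
      filter_upwards [Lp.coeFn_sub (S one) (η • S (one - |h|)),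
        Lp.coeFn_smul η (S (one - |h|))] with x h1 h2
      rw [h1, Pi.sub_apply, h2, Pi.smul_apply, smul_eq_mul]
    rw [integral_congr_ae hae, integral_sub (L1.integrable_coeFn (S one))
      ((L1.integrable_coeFn (S (one - |h|))).const_mul η), integral_const_mul]
    linarith [hSone]
  have hcη : c < η := by
    have h5 : η * c < η ^ 2 := by linarith
    nlinarith
  -- Chain B : `‖S f₀ - S h‖ ≤ η + c`
  have ordB : |f₀ - h| ≤ η • one + (one - |h|) := by
    rw [← Lp.coeFn_le]
    filter_upwards [key, Lp.coeFn_abs (f₀ - h), Lp.coeFn_sub f₀ h,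
      Lp.coeFn_add (η • one) (one - |h|), Lp.coeFn_smul η one, hw_coe, hone_coe]
      with t hk h1 h2 h3 h4 h5 h6
    rw [h1, h2, Pi.sub_apply, h3, Pi.add_apply, h4, Pi.smul_apply, smul_eq_mul, h5, h6, mul_one]
    exact hk.2.2
  have chainB : ‖S f₀ - S h‖ ≤ η + c := by
    rw [← map_sub]
    refine (normle _).trans ?_
    refine (intmono _ _ (hSmono _ _ ordB)).trans ?_
    have expand : S (η • one + (one - |h|)) = η • S one + S (one - |h|) := by
      rw [map_add, S.map_smul]
    rw [expand]
    have hae : ⇑(η • S one + S (one - |h|)) =ᵐ[ν]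
        fun x => η * (S one : β → ℝ) x + (S (one - |h|) : β → ℝ) x := by
      filter_upwards [Lp.coeFn_add (η • S one) (S (one - |h|)),
        Lp.coeFn_smul η (S one)] with x h1 h2
      rw [h1, Pi.add_apply, h2, Pi.smul_apply, smul_eq_mul]
    rw [integral_congr_ae hae, integral_add ((L1.integrable_coeFn (S one)).const_mul η)
      (L1.integrable_coeFn (S (one - |h|))), integral_const_mul]
    nlinarith [hSone]
  -- conclusion
  have htri : ‖S f₀‖ - ‖S h‖ ≤ ‖S f₀ - S h‖ := norm_sub_norm_le _ _
  nlinarith [mul_pos hη0 (sub_pos.mpr hη1)]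
end

section
/- For any positive measures μ and ν, the pair (L∞(μ), L₁(ν)) has the Bishop–Phelps–Bollobás property for positive operators: for every 0 < ε < 1 there exists 0 < η(ε) < ε such that whenever S : L∞(μ) → L₁(ν) is a positive operator with ‖S‖ = 1 and f₀ ∈ S_{L∞(μ)} satisfies ‖S(f₀)‖₁ > 1 - η(ε), there exist f₁ ∈ S_{L∞(μ)} and a positive operator T with ‖T‖ = 1 such that ‖T(f₁)‖₁ = ‖T‖ = 1, ‖f₁ - f₀‖∞ < ε, and ‖T - S‖ < ε. -/
open MeasureTheory Set
open scoped ENNReal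

section Aux

variable {γ : Type*} [MeasurableSpace γ] {μ : Measure γ}

/-- `a` has norm at most that of `b` when `|a| ≤ b` in a normed lattice group. -/
lemma norm_le_of_abs_le'' {E : Type*} [NormedAddCommGroup E] [Lattice E] [HasSolidNorm E] [IsOrderedAddMonoid E] {a b : E}
    (h : |a| ≤ b) : ‖a‖ ≤ ‖b‖ := by
  have hb : 0 ≤ b := (abs_nonneg a).trans h
  calc ‖a‖ = ‖|a|‖ := (norm_abs_eq_norm a).symm
    _ ≤ ‖b‖ := HasSolidNorm.solid (by rwa [abs_abs, abs_of_nonneg hb])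

lemma abs_add_lattice {E : Type*} [NormedAddCommGroup E] [Lattice E] [HasSolidNorm E] [IsOrderedAddMonoid E] (a b : E) :
    |a + b| ≤ |a| + |b| :=
  abs_le'.2 ⟨add_le_add (le_abs_self a) (le_abs_self b), by
    rw [neg_add]
    exact add_le_add (neg_le_abs a) (neg_le_abs b)⟩

lemma posCLM_mono {E F : Type*} [NormedAddCommGroup E] [Lattice E] [HasSolidNorm E] [IsOrderedAddMonoid E] [NormedAddCommGroup F] [Lattice F] [HasSolidNorm F] [IsOrderedAddMonoid F]
    [NormedSpace ℝ E] [NormedSpace ℝ F] (S : E →L[ℝ] F) (hS : ∀ f, 0 ≤ f → 0 ≤ S f)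
    {f g : E} (h : f ≤ g) : S f ≤ S g := by
  have h1 := hS (g - f) (sub_nonneg.2 h)
  rw [map_sub] at h1
  exact sub_nonneg.1 h1

lemma posCLM_abs {E F : Type*} [NormedAddCommGroup E] [Lattice E] [HasSolidNorm E] [IsOrderedAddMonoid E] [NormedAddCommGroup F] [Lattice F] [HasSolidNorm F] [IsOrderedAddMonoid F]
    [NormedSpace ℝ E] [NormedSpace ℝ F] (S : E →L[ℝ] F) (hS : ∀ f, 0 ≤ f → 0 ≤ S f)
    (f : E) : |S f| ≤ S |f| :=
  abs_le'.2 ⟨posCLM_mono S hS (le_abs_self f), by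
    rw [← map_neg]; exact posCLM_mono S hS (neg_le_abs f)⟩

/-- multiplication by the indicator of a measurable set, as a continuous linear map on Lp. -/
noncomputable def indCLM (μ : Measure γ) (p : ℝ≥0∞) [Fact (1 ≤ p)] {s : Set γ}
    (hs : MeasurableSet s) : Lp ℝ p μ →L[ℝ] Lp ℝ p μ :=
  LinearMap.mkContinuous
    { toFun := fun f => ((Lp.memLp f).indicator hs).toLp (s.indicator f)
      map_add' := by
        intro f g
        rw [← MemLp.toLp_add]
        refine MemLp.toLp_congr _ _ ?_
        filter_upwards [Lp.coeFn_add f g] with x hx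
        classical
        simp only [Set.indicator_apply, Pi.add_apply]
        by_cases hxs : x ∈ s
        · simpa [hxs] using hx
        · simp [hxs]
      map_smul' := by
        intro c f
        dsimp only [RingHom.id_apply]
        rw [← MemLp.toLp_const_smul]
        refine MemLp.toLp_congr _ _ ?_
        filter_upwards [Lp.coeFn_smul c f] with x hx
        classical
        simp only [Set.indicator_apply, Pi.smul_apply, smul_eq_mul]
        by_cases hxs : x ∈ s
        · simpa [hxs] using hx
        · simp [hxs] }
    1
    (by
      intro f
      simp only [LinearMap.coe_mk, AddHom.coe_mk, one_mul]
      rw [Lp.norm_toLp, Lp.norm_def]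
      refine ENNReal.toReal_mono (Lp.eLpNorm_ne_top f) (eLpNorm_mono_ae ?_)
      refine Filter.Eventually.of_forall fun x => ?_
      by_cases hx : x ∈ s <;> simp [Set.indicator_apply, hx])

variable {p : ℝ≥0∞} [Fact (1 ≤ p)] {s : Set γ} (hs : MeasurableSet s)

lemma indCLM_coeFn (f : Lp ℝ p μ) : ⇑(indCLM μ p hs f) =ᵐ[μ] s.indicator ⇑f :=
  by
  simp only [indCLM, LinearMap.mkContinuous_apply, LinearMap.coe_mk, AddHom.coe_mk]
  exact MemLp.coeFn_toLp _

lemma indCLM_pos (f : Lp ℝ p μ) (hf : 0 ≤ f) : 0 ≤ indCLM μ p hs f := by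
  rw [← Lp.coeFn_nonneg] at hf ⊢
  filter_upwards [indCLM_coeFn hs f, hf] with x hx h2
  classical
  rw [hx, Set.indicator_apply]
  by_cases hxs : x ∈ s
  · simpa [hxs] using h2
  · simp [hxs]


lemma indCLM_mono {f g : Lp ℝ p μ} (h : f ≤ g) : indCLM μ p hs f ≤ indCLM μ p hs g := by
  rw [← Lp.coeFn_le] at h ⊢
  filter_upwards [indCLM_coeFn hs f, indCLM_coeFn hs g, h] with x hxf hxg hfg
  classical
  rw [hxf, hxg, Set.indicator_apply, Set.indicator_apply]
  by_cases hxs : x ∈ s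
  · simpa [hxs] using hfg
  · simp [hxs]

/-- the indicators of a set and its complement sum to the identity. -/
lemma indCLM_add_compl (f : Lp ℝ p μ) :
    indCLM μ p hs f + indCLM μ p hs.compl f = f := by
  refine Lp.ext ?_
  filter_upwards [Lp.coeFn_add (indCLM μ p hs f) (indCLM μ p hs.compl f),
    indCLM_coeFn hs f, indCLM_coeFn hs.compl f] with x hadd hx1 hx2
  classical
  rw [hadd, Pi.add_apply, hx1, hx2, Set.indicator_apply, Set.indicator_apply]
  by_cases hxs : x ∈ s <;> simp [hxs]

/-- a.e. pointwise bound by the norm, for `L∞` functions. -/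
lemma Linfty_ae_bound (f : Lp ℝ ⊤ μ) : ∀ᵐ x ∂μ, |f x| ≤ ‖f‖ := by
  have h1 := ae_le_eLpNormEssSup (f := ⇑f) (μ := μ)
  have hne : eLpNormEssSup ⇑f μ ≠ ⊤ := by
    rw [← eLpNorm_exponent_top]; exact Lp.eLpNorm_ne_top f
  filter_upwards [h1] with x hx
  have h2 : ((‖f x‖₊ : ℝ≥0∞)).toReal ≤ (eLpNormEssSup ⇑f μ).toReal :=
    ENNReal.toReal_mono hne hx
  simpa [Lp.norm_def, eLpNorm_exponent_top, Real.norm_eq_abs] using h2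

/-- the constant function 1 in L∞. -/
noncomputable def LinftyOne (μ : Measure γ) : Lp ℝ ⊤ μ :=
  (memLp_top_const (1 : ℝ)).toLp _

lemma LinftyOne_coeFn : ⇑(LinftyOne μ) =ᵐ[μ] fun _ => (1 : ℝ) :=
  MemLp.coeFn_toLp _

lemma LinftyOne_norm (hμ : μ ≠ 0) : ‖LinftyOne μ‖ = 1 := by
  rw [LinftyOne, Lp.norm_toLp, eLpNorm_const (1 : ℝ) (by simp) hμ]
  simp

lemma indCLM_abs_le_smul {s : Set γ} (hs : MeasurableSet s) (f : Lp ℝ ⊤ μ) :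
    |indCLM μ ⊤ hs f| ≤ ‖f‖ • indCLM μ ⊤ hs (LinftyOne μ) := by
  rw [← Lp.coeFn_le]
  filter_upwards [Lp.coeFn_abs (indCLM μ ⊤ hs f), indCLM_coeFn hs f,
    Lp.coeFn_smul ‖f‖ (indCLM μ ⊤ hs (LinftyOne μ)), indCLM_coeFn hs (LinftyOne μ),
    LinftyOne_coeFn (μ := μ), Linfty_ae_bound f] with x habs hxf hsmul hxone hone hbd
  classical
  rw [habs, hxf, hsmul, Pi.smul_apply, hxone, Set.indicator_apply, Set.indicator_apply]
  by_cases hxs : x ∈ s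
  · simpa [hxs, hone] using hbd
  · simp [hxs]

/-- norm of a nonnegative L¹ function is its integral. -/
lemma L1_norm_of_nonneg {h : Lp ℝ 1 μ} (hh : 0 ≤ h) : ‖h‖ = ∫ y, h y ∂μ := by
  rw [L1.norm_eq_integral_norm]
  refine integral_congr_ae ?_
  filter_upwards [(Lp.coeFn_nonneg h).2 hh] with y hy
  exact Real.norm_of_nonneg hy

lemma integral_le_L1_norm (h : Lp ℝ 1 μ) : ∫ y, h y ∂μ ≤ ‖h‖ := by
  rw [L1.norm_eq_integral_norm]
  exact integral_mono (L1.integrable_coeFn h) (L1.integrable_coeFn h).norm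
    fun y => le_abs_self _


lemma smul_nonneg_Lp {c : ℝ} (hc : 0 ≤ c) {f : Lp ℝ p μ} (hf : 0 ≤ f) : 0 ≤ c • f := by
  rw [← Lp.coeFn_nonneg] at hf ⊢
  filter_upwards [Lp.coeFn_smul c f, hf] with x h1 h2
  rw [h1, Pi.smul_apply, smul_eq_mul]
  exact mul_nonneg hc (by simpa using h2)

end Aux

set_option maxHeartbeats 4000000 in
/-- The pair `(L∞(μ), L₁(ν))` has the Bishop–Phelps–Bollobás property for positive
operators: for every `0 < ε < 1` there exists `0 < η < ε` such that whenever `S` is a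
positive norm-one operator and `f₀` is a norm-one function with `‖S f₀‖₁ > 1 - η`, there
exist a norm-one `f₁` and a positive norm-one operator `T` attaining its norm at `f₁`,
with `‖f₁ - f₀‖∞ < ε` and `‖T - S‖ < ε`. -/
theorem bishopPhelpsBollobas_positive_Linfty_L1
    {α β : Type*} [MeasurableSpace α] [MeasurableSpace β]
    (μ : Measure α) (ν : Measure β) :
    ∀ ε : ℝ, 0 < ε → ε < 1 →
      ∃ η : ℝ, 0 < η ∧ η < ε ∧
        ∀ S : Lp ℝ ⊤ μ →L[ℝ] Lp ℝ 1 ν,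
          (∀ f : Lp ℝ ⊤ μ, 0 ≤ f → 0 ≤ S f) → ‖S‖ = 1 →
          ∀ f₀ : Lp ℝ ⊤ μ, ‖f₀‖ = 1 → ‖S f₀‖ > 1 - η →
            ∃ (f₁ : Lp ℝ ⊤ μ) (T : Lp ℝ ⊤ μ →L[ℝ] Lp ℝ 1 ν),
              ‖f₁‖ = 1 ∧ (∀ f : Lp ℝ ⊤ μ, 0 ≤ f → 0 ≤ T f) ∧ ‖T‖ = 1 ∧
              ‖T f₁‖ = 1 ∧ ‖f₁ - f₀‖ < ε ∧ ‖T - S‖ < ε := by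
  classical
  intro ε hε hε1
  refine ⟨ε ^ 2 / 16, by positivity, by nlinarith, ?_⟩
  intro S hSpos hSnorm f₀ hf₀ hSf₀
  set η : ℝ := ε ^ 2 / 16 with hηdef
  set δ : ℝ := ε / 2 with hδdef
  have hηε : η ≤ ε / 16 := by rw [hηdef]; nlinarith
  have hηpos : 0 < η := by positivity
  have hδpos : 0 < δ := by positivity
  have hδhalf : δ ≤ 1 / 2 := by rw [hδdef]; linarith
  have h1δ : (0:ℝ) < 1 - δ := by linarith
  -- the measure μ is nonzero
  have hμ : μ ≠ 0 := by
    rintro rfl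
    have h0 : ‖f₀‖ = 0 := by rw [Lp.norm_def]; simp
    rw [hf₀] at h0; exact one_ne_zero h0
  -- measurable representative of f₀
  set g₀ : α → ℝ := (Lp.aestronglyMeasurable f₀).mk ⇑f₀ with hg₀def
  have hg₀ : ⇑f₀ =ᵐ[μ] g₀ := (Lp.aestronglyMeasurable f₀).ae_eq_mk
  have hg₀m : Measurable g₀ :=
    (Lp.aestronglyMeasurable f₀).stronglyMeasurable_mk.measurable
  have hbd : ∀ᵐ x ∂μ, |f₀ x| ≤ 1 := by simpa [hf₀] using Linfty_ae_bound f₀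
  -- the three sets in the domain
  set Ap : Set α := {x | 1 - δ < g₀ x} with hApdef
  set An : Set α := {x | g₀ x < -(1 - δ)} with hAndef
  have hAp : MeasurableSet Ap := measurableSet_lt measurable_const hg₀m
  have hAn : MeasurableSet An := measurableSet_lt hg₀m measurable_const
  have hAc : MeasurableSet (Ap ∪ An)ᶜ := (hAp.union hAn).compl
  -- the set in the codomain
  set p1 : Lp ℝ 1 ν := S f₀⁺ with hp1def
  set n1 : Lp ℝ 1 ν := S f₀⁻ with hn1def
  have hp1 : 0 ≤ p1 := hSpos _ (posPart_nonneg f₀)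
  have hn1 : 0 ≤ n1 := hSpos _ (negPart_nonneg f₀)
  set pm : β → ℝ := (Lp.aestronglyMeasurable p1).mk ⇑p1 with hpmdef
  set nm : β → ℝ := (Lp.aestronglyMeasurable n1).mk ⇑n1 with hnmdef
  have hpm : ⇑p1 =ᵐ[ν] pm := (Lp.aestronglyMeasurable p1).ae_eq_mk
  have hnm : ⇑n1 =ᵐ[ν] nm := (Lp.aestronglyMeasurable n1).ae_eq_mk
  set B : Set β := {y | nm y ≤ pm y} with hBdef
  have hB : MeasurableSet B :=
    measurableSet_le (Lp.aestronglyMeasurable n1).stronglyMeasurable_mk.measurable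
      (Lp.aestronglyMeasurable p1).stronglyMeasurable_mk.measurable
  -- the operators
  set Mp := indCLM μ ⊤ hAp with hMpdef
  set Mn := indCLM μ ⊤ hAn with hMndef
  set Mc := indCLM μ ⊤ hAc with hMcdef
  set PB := indCLM ν 1 hB with hPBdef
  set PBc := indCLM ν 1 hB.compl with hPBcdef
  set one : Lp ℝ ⊤ μ := LinftyOne μ with honedef
  have honenorm : ‖one‖ = 1 := LinftyOne_norm hμ
  have hone0 : 0 ≤ one := by
    rw [← Lp.coeFn_nonneg]
    filter_upwards [LinftyOne_coeFn (μ := μ)] with x hx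
    rw [hx]; norm_num
  set sp : Lp ℝ 1 ν := S (Mp one) with hspdef
  set sn : Lp ℝ 1 ν := S (Mn one) with hsndef
  set sc : Lp ℝ 1 ν := S (Mc one) with hscdef
  have hsc0 : 0 ≤ sc := hSpos _ (indCLM_pos hAc one hone0)
  set R : Lp ℝ ⊤ μ →L[ℝ] Lp ℝ 1 ν :=
    PB.comp (S.comp Mp) + PBc.comp (S.comp Mn) with hRdef
  have hRapp : ∀ f, R f = PB (S (Mp f)) + PBc (S (Mn f)) := fun f => rfl
  have hRone : R one = PB sp + PBc sn := hRapp one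
  have hPBpos : ∀ g : Lp ℝ 1 ν, 0 ≤ g → 0 ≤ PB g := fun g hg => indCLM_pos hB g hg
  have hPBcpos : ∀ g : Lp ℝ 1 ν, 0 ≤ g → 0 ≤ PBc g := fun g hg => indCLM_pos hB.compl g hg
  have hMpabs : ∀ f : Lp ℝ ⊤ μ, |Mp f| ≤ ‖f‖ • Mp one := fun f => indCLM_abs_le_smul hAp f
  have hMnabs : ∀ f : Lp ℝ ⊤ μ, |Mn f| ≤ ‖f‖ • Mn one := fun f => indCLM_abs_le_smul hAn f
  have hMcabs : ∀ f : Lp ℝ ⊤ μ, |Mc f| ≤ ‖f‖ • Mc one := fun f => indCLM_abs_le_smul hAc f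
  -- R is positive
  have hRpos : ∀ f : Lp ℝ ⊤ μ, 0 ≤ f → 0 ≤ R f := by
    intro f hf
    rw [hRapp]
    exact add_nonneg (indCLM_pos hB _ (hSpos _ (indCLM_pos hAp f hf)))
      (indCLM_pos hB.compl _ (hSpos _ (indCLM_pos hAn f hf)))
  -- splitting identities
  have hBsplit : ∀ g : Lp ℝ 1 ν, PB g + PBc g = g := fun g => indCLM_add_compl hB g
  have hsplit : ∀ f : Lp ℝ ⊤ μ, Mp f + Mn f + Mc f = f := by
    intro f
    refine Lp.ext ?_
    filter_upwards [Lp.coeFn_add (Mp f + Mn f) (Mc f), Lp.coeFn_add (Mp f) (Mn f),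
      indCLM_coeFn hAp f, indCLM_coeFn hAn f, indCLM_coeFn hAc f] with x h1 h2 h3 h4 h5
    rw [h1, Pi.add_apply, h2, Pi.add_apply, h3, h4, h5]
    by_cases hp : x ∈ Ap
    · have hn : x ∉ An := by
        intro hn
        have e1 : 1 - δ < g₀ x := hp
        have e2 : g₀ x < -(1 - δ) := hn
        linarith
      have hc : x ∉ (Ap ∪ An)ᶜ := by simp [hp]
      simp [Set.indicator_apply, hp, hn, hc]
    · by_cases hn : x ∈ An
      · have hc : x ∉ (Ap ∪ An)ᶜ := by simp [hn]
        simp [Set.indicator_apply, hp, hn, hc]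
      · have hc : x ∈ (Ap ∪ An)ᶜ := by simp [hp, hn]
        simp [Set.indicator_apply, hp, hn, hc]
  -- the new norming function f₁
  set f₁fun : α → ℝ :=
    fun x => if 1 - δ < g₀ x then 1 else if g₀ x < -(1 - δ) then -1 else g₀ x with hf₁fundef
  have hf₁m : Measurable f₁fun :=
    Measurable.ite (measurableSet_lt measurable_const hg₀m) measurable_const
      (Measurable.ite (measurableSet_lt hg₀m measurable_const) measurable_const hg₀m)
  have hgbd : ∀ᵐ x ∂μ, |g₀ x| ≤ 1 := by
    filter_upwards [hbd, hg₀] with x hx hgx; rwa [hgx] at hx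
  have hf₁apply : ∀ x, f₁fun x =
      if 1 - δ < g₀ x then 1 else if g₀ x < -(1 - δ) then -1 else g₀ x := fun _ => rfl
  have hf₁bd : ∀ᵐ x ∂μ, ‖f₁fun x‖ ≤ 1 := by
    filter_upwards [hgbd] with x hx
    rw [Real.norm_eq_abs, hf₁apply]
    split
    · norm_num
    · split
      · norm_num
      · exact hx
  have hf₁mem : MemLp f₁fun ⊤ μ := memLp_top_of_bound hf₁m.aestronglyMeasurable 1 hf₁bd
  set f₁ : Lp ℝ ⊤ μ := hf₁mem.toLp f₁fun with hf₁def
  have hf₁coe : ⇑f₁ =ᵐ[μ] f₁fun := MemLp.coeFn_toLp hf₁mem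
  have hf₁norm : ‖f₁‖ = 1 := by
    have hle : ‖f₁‖ ≤ 1 := by
      rw [hf₁def, Lp.norm_toLp]
      refine ENNReal.toReal_le_of_le_ofReal zero_le_one ?_
      have := eLpNorm_le_of_ae_bound (p := (⊤ : ℝ≥0∞)) (μ := μ) hf₁bd
      simpa using this
    have hge : (1:ℝ) ≤ ‖f₁‖ := by
      rw [← hf₀]
      refine norm_le_of_abs_le'' ?_ |>.trans (le_of_eq (norm_abs_eq_norm f₁))
      rw [← Lp.coeFn_le]
      filter_upwards [Lp.coeFn_abs f₀, Lp.coeFn_abs f₁, hf₁coe, hg₀, hgbd]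
        with x h1 h2 h3 h4 h5
      rw [h1, h2, h3, h4, hf₁apply]
      split
      · rw [abs_one]; exact h5
      · split
        · rw [abs_neg, abs_one]; exact h5
        · exact le_rfl
    linarith
  have hclose : ‖f₁ - f₀‖ ≤ δ := by
    rw [Lp.norm_def]
    refine ENNReal.toReal_le_of_le_ofReal hδpos.le ?_
    have hae : ⇑(f₁ - f₀) =ᵐ[μ] fun x => f₁fun x - g₀ x := by
      filter_upwards [Lp.coeFn_sub f₁ f₀, hf₁coe, hg₀] with x h1 h2 h3
      rw [h1, Pi.sub_apply, h2, h3]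
    rw [eLpNorm_congr_ae hae]
    have hptbd : ∀ᵐ x ∂μ, ‖f₁fun x - g₀ x‖ ≤ δ := by
      filter_upwards [hgbd] with x hx
      rw [Real.norm_eq_abs, hf₁apply]
      rcases abs_le.1 hx with ⟨hx1, hx2⟩
      split
      · next h => rw [abs_le]; constructor <;> linarith
      · split
        · next h => rw [abs_le]; constructor <;> linarith
        · simp [hδpos.le]
    have := eLpNorm_le_of_ae_bound (p := (⊤ : ℝ≥0∞)) (μ := μ) hptbd
    simpa using this
  -- f₁ matches the signs on Ap and An
  have hMpf₁ : Mp f₁ = Mp one := by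
    refine Lp.ext ?_
    filter_upwards [indCLM_coeFn hAp f₁, indCLM_coeFn hAp one, hf₁coe,
      LinftyOne_coeFn (μ := μ)] with x h1 h2 h3 h4
    rw [h1, h2, Set.indicator_apply, Set.indicator_apply]
    by_cases hxs : x ∈ Ap
    · have hx : 1 - δ < g₀ x := hxs
      simp only [hxs, if_pos, h3, h4, hf₁apply, if_pos hx]
      exact h4.symm
    · simp [hxs]
  have hMnf₁ : Mn f₁ = -(Mn one) := by
    have : ⇑(Mn f₁) =ᵐ[μ] ⇑(-(Mn one)) := by
      filter_upwards [indCLM_coeFn hAn f₁, indCLM_coeFn hAn one, hf₁coe,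
        LinftyOne_coeFn (μ := μ), Lp.coeFn_neg (Mn one)] with x h1 h2 h3 h4 h5
      rw [h1, h5, Pi.neg_apply, h2, Set.indicator_apply, Set.indicator_apply]
      by_cases hxs : x ∈ An
      · have hx : g₀ x < -(1 - δ) := hxs
        have hx2 : ¬ (1 - δ < g₀ x) := by linarith
        simp only [hxs, if_pos, h3, h4, hf₁apply, if_neg hx2, if_pos hx]
        exact congrArg Neg.neg h4.symm
      · simp [hxs]
    exact Lp.ext this
  -- R attains its norm at f₁, in the sense that ‖R f₁‖ = ‖R 1‖
  have hRf₁eq : R f₁ = PB sp - PBc sn := by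
    rw [hRapp, hMpf₁, hMnf₁, map_neg, map_neg, ← sub_eq_add_neg]
  have hnormeq : ‖R f₁‖ = ‖R one‖ := by
    rw [← norm_abs_eq_norm (R f₁), ← norm_abs_eq_norm (R one)]
    congr 1
    refine Lp.ext ?_
    rw [hRf₁eq, hRone]
    filter_upwards [Lp.coeFn_abs (PB sp - PBc sn), Lp.coeFn_abs (PB sp + PBc sn),
      Lp.coeFn_sub (PB sp) (PBc sn), Lp.coeFn_add (PB sp) (PBc sn),
      indCLM_coeFn hB sp, indCLM_coeFn hB.compl sn] with y h1 h2 h3 h4 h5 h6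
    rw [h1, h2, h3, h4, Pi.sub_apply, Pi.add_apply, h5, h6,
      Set.indicator_apply, Set.indicator_apply]
    by_cases hyB : y ∈ B
    · have : y ∉ Bᶜ := by simp [hyB]
      simp [hyB, this]
    · have : y ∈ Bᶜ := by simp [hyB]
      simp [hyB, this]
  -- ‖R‖ is computed at the constant function 1
  have habsRf : ∀ f : Lp ℝ ⊤ μ, |R f| ≤ ‖f‖ • R one := by
    intro f
    rw [hRapp, hRone]
    calc |PB (S (Mp f)) + PBc (S (Mn f))|
        ≤ |PB (S (Mp f))| + |PBc (S (Mn f))| := abs_add_lattice _ _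
      _ ≤ PB |S (Mp f)| + PBc |S (Mn f)| :=
          add_le_add (posCLM_abs PB hPBpos _) (posCLM_abs PBc hPBcpos _)
      _ ≤ PB (S |Mp f|) + PBc (S |Mn f|) :=
          add_le_add (posCLM_mono PB hPBpos (posCLM_abs S hSpos _))
            (posCLM_mono PBc hPBcpos (posCLM_abs S hSpos _))
      _ ≤ PB (S (‖f‖ • Mp one)) + PBc (S (‖f‖ • Mn one)) :=
          add_le_add
            (posCLM_mono PB hPBpos (posCLM_mono S hSpos (hMpabs f)))
            (posCLM_mono PBc hPBcpos (posCLM_mono S hSpos (hMnabs f)))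
      _ = ‖f‖ • (PB sp + PBc sn) := by
          rw [hspdef, hsndef]
          simp only [ContinuousLinearMap.map_smul, smul_add]
  have hRnormle : ‖R‖ ≤ ‖R one‖ := by
    refine ContinuousLinearMap.opNorm_le_bound R (norm_nonneg _) fun f => ?_
    calc ‖R f‖ ≤ ‖‖f‖ • R one‖ := norm_le_of_abs_le'' (habsRf f)
      _ = ‖R one‖ * ‖f‖ := by rw [norm_smul, Real.norm_of_nonneg (norm_nonneg f), mul_comm]
  have hRnorm : ‖R‖ = ‖R one‖ := le_antisymm hRnormle (by
    calc ‖R one‖ ≤ ‖R‖ * ‖one‖ := R.le_opNorm one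
      _ = ‖R‖ := by rw [honenorm, mul_one])
  -- the distance from S to R
  set W : Lp ℝ 1 ν := PBc sp + PB sn + sc with hWdef
  have hSRid : ∀ f : Lp ℝ ⊤ μ, S f - R f
      = PB (S (Mn f) + S (Mc f)) + PBc (S (Mp f) + S (Mc f)) := by
    intro f
    have hSf3 : S f = S (Mp f) + S (Mn f) + S (Mc f) := by
      rw [← map_add, ← map_add, hsplit f]
    calc S f - R f = (PB (S f) + PBc (S f)) - (PB (S (Mp f)) + PBc (S (Mn f))) := by
          rw [hBsplit (S f), hRapp]
      _ = (PB (S f) - PB (S (Mp f))) + (PBc (S f) - PBc (S (Mn f))) := by abel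
      _ = PB (S f - S (Mp f)) + PBc (S f - S (Mn f)) := by rw [map_sub, map_sub]
      _ = PB (S (Mn f) + S (Mc f)) + PBc (S (Mp f) + S (Mc f)) := by
          rw [show S f - S (Mp f) = S (Mn f) + S (Mc f) by rw [hSf3]; abel,
            show S f - S (Mn f) = S (Mp f) + S (Mc f) by rw [hSf3]; abel]
  have habsSR : ∀ f : Lp ℝ ⊤ μ, |S f - R f| ≤ ‖f‖ • W := by
    intro f
    rw [hSRid f]
    have h1 : |S (Mn f) + S (Mc f)| ≤ ‖f‖ • (sn + sc) := by
      calc |S (Mn f) + S (Mc f)| ≤ |S (Mn f)| + |S (Mc f)| := abs_add_lattice _ _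
        _ ≤ S |Mn f| + S |Mc f| := add_le_add (posCLM_abs S hSpos _) (posCLM_abs S hSpos _)
        _ ≤ S (‖f‖ • Mn one) + S (‖f‖ • Mc one) :=
            add_le_add (posCLM_mono S hSpos (hMnabs f))
              (posCLM_mono S hSpos (hMcabs f))
        _ = ‖f‖ • (sn + sc) := by
            rw [hsndef, hscdef]
            simp only [ContinuousLinearMap.map_smul, smul_add]
    have h2 : |S (Mp f) + S (Mc f)| ≤ ‖f‖ • (sp + sc) := by
      calc |S (Mp f) + S (Mc f)| ≤ |S (Mp f)| + |S (Mc f)| := abs_add_lattice _ _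
        _ ≤ S |Mp f| + S |Mc f| := add_le_add (posCLM_abs S hSpos _) (posCLM_abs S hSpos _)
        _ ≤ S (‖f‖ • Mp one) + S (‖f‖ • Mc one) :=
            add_le_add (posCLM_mono S hSpos (hMpabs f))
              (posCLM_mono S hSpos (hMcabs f))
        _ = ‖f‖ • (sp + sc) := by
            rw [hspdef, hscdef]
            simp only [ContinuousLinearMap.map_smul, smul_add]
    have hW : PB (sn + sc) + PBc (sp + sc) = W := by
      rw [map_add, map_add]
      conv_rhs => rw [hWdef, ← hBsplit sc]
      abel
    calc |PB (S (Mn f) + S (Mc f)) + PBc (S (Mp f) + S (Mc f))|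
        ≤ |PB (S (Mn f) + S (Mc f))| + |PBc (S (Mp f) + S (Mc f))| := abs_add_lattice _ _
      _ ≤ PB |S (Mn f) + S (Mc f)| + PBc |S (Mp f) + S (Mc f)| :=
          add_le_add (posCLM_abs PB hPBpos _) (posCLM_abs PBc hPBcpos _)
      _ ≤ PB (‖f‖ • (sn + sc)) + PBc (‖f‖ • (sp + sc)) :=
          add_le_add (posCLM_mono PB hPBpos h1)
            (posCLM_mono PBc hPBcpos h2)
      _ = ‖f‖ • (PB (sn + sc) + PBc (sp + sc)) := by
          simp only [ContinuousLinearMap.map_smul, smul_add, map_add]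
      _ = ‖f‖ • W := by rw [hW]
  have hSRle : ‖S - R‖ ≤ ‖W‖ := by
    refine ContinuousLinearMap.opNorm_le_bound _ (norm_nonneg _) fun f => ?_
    rw [ContinuousLinearMap.sub_apply]
    calc ‖S f - R f‖ ≤ ‖‖f‖ • W‖ := norm_le_of_abs_le'' (habsSR f)
      _ = ‖W‖ * ‖f‖ := by rw [norm_smul, Real.norm_of_nonneg (norm_nonneg f), mul_comm]
  -- |f₀| ≤ 1
  have hf₀abs_le : |f₀| ≤ one := by
    rw [← Lp.coeFn_le]
    filter_upwards [Lp.coeFn_abs f₀, LinftyOne_coeFn (μ := μ), hbd] with x h1 h2 h3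
    rw [h1, h2]; exact h3
  have hintone : ∫ y, (S one) y ∂ν ≤ 1 :=
    calc ∫ y, (S one) y ∂ν ≤ ‖S one‖ := integral_le_L1_norm _
      _ ≤ ‖S‖ * ‖one‖ := S.le_opNorm one
      _ = 1 := by rw [hSnorm, honenorm, one_mul]
  have hintabs : 1 - η < ∫ y, (S |f₀|) y ∂ν := by
    have hstep : ‖S f₀‖ ≤ ∫ y, (S |f₀|) y ∂ν := by
      rw [L1.norm_eq_integral_norm]
      refine integral_mono_ae (L1.integrable_coeFn _).norm (L1.integrable_coeFn _) ?_
      have hle := (Lp.coeFn_le _ _).2 (posCLM_abs S hSpos f₀)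
      filter_upwards [hle, Lp.coeFn_abs (S f₀)] with y h1 h2
      rw [Real.norm_eq_abs, ← h2]
      exact h1
    linarith [hSf₀]
  -- estimate for sc
  have hscnorm : δ * ‖sc‖ ≤ η := by
    have hord : δ • Mc one ≤ one - |f₀| := by
      rw [← Lp.coeFn_le]
      filter_upwards [Lp.coeFn_smul δ (Mc one), indCLM_coeFn hAc one,
        LinftyOne_coeFn (μ := μ), Lp.coeFn_sub one |f₀|, Lp.coeFn_abs f₀, hbd, hg₀]
        with x h1 h2 h3 h4 h5 h6 h7
      rw [h1, Pi.smul_apply, h2, h4, Pi.sub_apply, h5, smul_eq_mul, Set.indicator_apply]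
      by_cases hxs : x ∈ (Ap ∪ An)ᶜ
      · rw [if_pos hxs, h3]
        have hx1 : ¬(1 - δ < g₀ x) := fun hc => hxs (Or.inl hc)
        have hx2 : ¬(g₀ x < -(1 - δ)) := fun hc => hxs (Or.inr hc)
        rw [h7]
        have habs : |g₀ x| ≤ 1 - δ := abs_le.2 ⟨by linarith, by linarith⟩
        linarith
      · rw [if_neg hxs, mul_zero]
        linarith
    have h2 : δ • sc ≤ S one - S |f₀| := by
      have h3 := posCLM_mono S hSpos hord
      rwa [ContinuousLinearMap.map_smul, map_sub] at h3
    have h0 : 0 ≤ δ • sc := smul_nonneg_Lp hδpos.le hsc0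
    have h4 : ‖δ • sc‖ ≤ ‖S one - S |f₀|‖ :=
      norm_le_of_abs_le'' (by rwa [abs_of_nonneg h0])
    have h5 : 0 ≤ S one - S |f₀| := sub_nonneg.2 (posCLM_mono S hSpos hf₀abs_le)
    have h6 : ‖S one - S |f₀|‖ = (∫ y, (S one) y ∂ν) - ∫ y, (S |f₀|) y ∂ν := by
      rw [L1_norm_of_nonneg h5,
        integral_congr_ae (Lp.coeFn_sub (S one) (S |f₀|))]
      exact integral_sub (L1.integrable_coeFn _) (L1.integrable_coeFn _)
    have h7 : ‖δ • sc‖ = δ * ‖sc‖ := by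
      rw [norm_smul, Real.norm_of_nonneg hδpos.le]
    rw [h7] at h4
    rw [h6] at h4
    linarith
  -- estimate for the B-mismatch terms
  have hkey2 : ‖PBc p1‖ + ‖PB n1‖ ≤ η / 2 := by
    have e1 : ‖PBc p1‖ = ∫ y, Set.indicator Bᶜ (⇑p1) y ∂ν := by
      rw [L1_norm_of_nonneg (hPBcpos p1 hp1)]
      exact integral_congr_ae (indCLM_coeFn hB.compl p1)
    have e2 : ‖PB n1‖ = ∫ y, Set.indicator B (⇑n1) y ∂ν := by
      rw [L1_norm_of_nonneg (hPBpos n1 hn1)]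
      exact integral_congr_ae (indCLM_coeFn hB n1)
    have hi1 : Integrable (Set.indicator Bᶜ (⇑p1)) ν :=
      (L1.integrable_coeFn p1).indicator hB.compl
    have hi2 : Integrable (Set.indicator B (⇑n1)) ν :=
      (L1.integrable_coeFn n1).indicator hB
    have hiadd : Integrable (fun y => p1 y + n1 y) ν :=
      (L1.integrable_coeFn p1).add (L1.integrable_coeFn n1)
    have hiabs : Integrable (fun y => |p1 y - n1 y|) ν :=
      ((L1.integrable_coeFn p1).sub (L1.integrable_coeFn n1)).abs
    have esum : ∫ y, Set.indicator Bᶜ (⇑p1) y ∂ν + ∫ y, Set.indicator B (⇑n1) y ∂ν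
        = ∫ y, (Set.indicator Bᶜ (⇑p1) y + Set.indicator B (⇑n1) y) ∂ν :=
      (integral_add hi1 hi2).symm
    have eptwise : (fun y => Set.indicator Bᶜ (⇑p1) y + Set.indicator B (⇑n1) y)
        =ᵐ[ν] fun y => ((p1 y + n1 y) - |p1 y - n1 y|) / 2 := by
      filter_upwards [hpm, hnm] with y hy1 hy2
      by_cases hyB : y ∈ B
      · have hle : nm y ≤ pm y := hyB
        have hyc : y ∉ Bᶜ := fun hc => hc hyB
        rw [Set.indicator_of_notMem hyc, Set.indicator_of_mem hyB, hy1, hy2,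
          abs_of_nonneg (by linarith : (0:ℝ) ≤ pm y - nm y)]
        ring
      · have hyc : y ∈ Bᶜ := hyB
        have hlt : ¬ (nm y ≤ pm y) := hyB
        rw [Set.indicator_of_mem hyc, Set.indicator_of_notMem hyB, hy1, hy2,
          abs_of_nonpos (by push_neg at hlt; linarith : pm y - nm y ≤ 0)]
        ring
    have hintsum : ∫ y, (p1 y + n1 y) ∂ν ≤ 1 := by
      have hc1 : (fun y => p1 y + n1 y) =ᵐ[ν] ⇑(p1 + n1) := by
        filter_upwards [Lp.coeFn_add p1 n1] with y hy
        rw [hy, Pi.add_apply]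
      rw [integral_congr_ae hc1]
      have hc2 : p1 + n1 = S |f₀| := by
        rw [hp1def, hn1def, ← map_add, posPart_add_negPart]
      calc ∫ y, (p1 + n1) y ∂ν ≤ ‖p1 + n1‖ := integral_le_L1_norm _
        _ = ‖S |f₀|‖ := by rw [hc2]
        _ ≤ ‖S‖ * ‖|f₀|‖ := S.le_opNorm _
        _ = 1 := by rw [hSnorm, norm_abs_eq_norm, hf₀, one_mul]
    have hintdiff : 1 - η < ∫ y, |p1 y - n1 y| ∂ν := by
      have hd1 : (fun y => |p1 y - n1 y|) =ᵐ[ν] fun y => ‖(p1 - n1) y‖ := by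
        filter_upwards [Lp.coeFn_sub p1 n1] with y hy
        rw [Real.norm_eq_abs, hy, Pi.sub_apply]
      rw [integral_congr_ae hd1, ← L1.norm_eq_integral_norm]
      have hd2 : p1 - n1 = S f₀ := by
        rw [hp1def, hn1def, ← map_sub, posPart_sub_negPart]
      rw [hd2]
      exact hSf₀
    have ehalf : ∫ y, ((p1 y + n1 y) - |p1 y - n1 y|) / 2 ∂ν
        = ((∫ y, (p1 y + n1 y) ∂ν) - ∫ y, |p1 y - n1 y| ∂ν) / 2 := by
      rw [integral_div, integral_sub hiadd hiabs]
    rw [e1, e2, esum, integral_congr_ae eptwise, ehalf]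
    linarith
  -- comparison of the indicators with the positive/negative parts
  have hpc : ⇑(f₀⁺) =ᵐ[μ] fun x => max (⇑f₀ x) 0 := by
    rw [posPart_def]
    filter_upwards [Lp.coeFn_sup f₀ 0, Lp.coeFn_zero ℝ ⊤ μ] with x h1 h2
    rw [h1, Pi.sup_apply, h2]
    simp [max_def]
  have hnc : ⇑(f₀⁻) =ᵐ[μ] fun x => max (-(⇑f₀ x)) 0 := by
    rw [negPart_def]
    filter_upwards [Lp.coeFn_sup (-f₀) 0, Lp.coeFn_zero ℝ ⊤ μ, Lp.coeFn_neg f₀]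
      with x h1 h2 h3
    rw [h1, Pi.sup_apply, h2, h3]
    simp [max_def]
  have hMpposle : Mp one ≤ (1 - δ)⁻¹ • f₀⁺ := by
    rw [← Lp.coeFn_le]
    filter_upwards [indCLM_coeFn hAp one, LinftyOne_coeFn (μ := μ),
      Lp.coeFn_smul (1 - δ)⁻¹ f₀⁺, hpc, hg₀] with x h1 h2 h3 h4 h5
    rw [h1, h3, Pi.smul_apply, h4, smul_eq_mul, Set.indicator_apply]
    by_cases hxs : x ∈ Ap
    · rw [if_pos hxs, h2]
      have hx : 1 - δ < g₀ x := hxs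
      rw [h5, max_eq_left (by linarith)]
      calc (1:ℝ) = (1 - δ)⁻¹ * (1 - δ) := by field_simp
        _ ≤ (1 - δ)⁻¹ * g₀ x :=
            mul_le_mul_of_nonneg_left hx.le (inv_nonneg.2 h1δ.le)
    · rw [if_neg hxs]
      exact mul_nonneg (inv_nonneg.2 h1δ.le) (le_max_right _ _)
  have hMnposle : Mn one ≤ (1 - δ)⁻¹ • f₀⁻ := by
    rw [← Lp.coeFn_le]
    filter_upwards [indCLM_coeFn hAn one, LinftyOne_coeFn (μ := μ),
      Lp.coeFn_smul (1 - δ)⁻¹ f₀⁻, hnc, hg₀] with x h1 h2 h3 h4 h5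
    rw [h1, h3, Pi.smul_apply, h4, smul_eq_mul, Set.indicator_apply]
    by_cases hxs : x ∈ An
    · rw [if_pos hxs, h2]
      have hx : g₀ x < -(1 - δ) := hxs
      rw [h5, max_eq_left (by linarith)]
      calc (1:ℝ) = (1 - δ)⁻¹ * (1 - δ) := by field_simp
        _ ≤ (1 - δ)⁻¹ * (-(g₀ x)) :=
            mul_le_mul_of_nonneg_left (by linarith) (inv_nonneg.2 h1δ.le)
    · rw [if_neg hxs]
      exact mul_nonneg (inv_nonneg.2 h1δ.le) (le_max_right _ _)
  have hspn : ‖PBc sp‖ ≤ (1 - δ)⁻¹ * ‖PBc p1‖ := by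
    have h1 : sp ≤ (1 - δ)⁻¹ • p1 := by
      have h := posCLM_mono S hSpos hMpposle
      rwa [ContinuousLinearMap.map_smul] at h
    have h2 : PBc sp ≤ (1 - δ)⁻¹ • PBc p1 := by
      have h := posCLM_mono PBc hPBcpos h1
      rwa [ContinuousLinearMap.map_smul] at h
    have h0 : 0 ≤ PBc sp := hPBcpos _ (hSpos _ (indCLM_pos hAp one hone0))
    calc ‖PBc sp‖ ≤ ‖(1 - δ)⁻¹ • PBc p1‖ :=
        norm_le_of_abs_le'' (by rwa [abs_of_nonneg h0])
      _ = (1 - δ)⁻¹ * ‖PBc p1‖ := by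
          rw [norm_smul, Real.norm_of_nonneg (inv_nonneg.2 h1δ.le)]
  have hsnn : ‖PB sn‖ ≤ (1 - δ)⁻¹ * ‖PB n1‖ := by
    have h1 : sn ≤ (1 - δ)⁻¹ • n1 := by
      have h := posCLM_mono S hSpos hMnposle
      rwa [ContinuousLinearMap.map_smul] at h
    have h2 : PB sn ≤ (1 - δ)⁻¹ • PB n1 := by
      have h := posCLM_mono PB hPBpos h1
      rwa [ContinuousLinearMap.map_smul] at h
    have h0 : 0 ≤ PB sn := hPBpos _ (hSpos _ (indCLM_pos hAn one hone0))
    calc ‖PB sn‖ ≤ ‖(1 - δ)⁻¹ • PB n1‖ :=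
        norm_le_of_abs_le'' (by rwa [abs_of_nonneg h0])
      _ = (1 - δ)⁻¹ * ‖PB n1‖ := by
          rw [norm_smul, Real.norm_of_nonneg (inv_nonneg.2 h1δ.le)]
  -- the total distance estimate
  have hWnorm : ‖W‖ ≤ 3 * ε / 16 := by
    have t1 : ‖W‖ ≤ ‖PBc sp‖ + ‖PB sn‖ + ‖sc‖ :=
      (norm_add_le _ _).trans (add_le_add_left (norm_add_le _ _) _)
    have hinv2 : (1 - δ)⁻¹ ≤ 2 := by
      have h := inv_anti₀ (by norm_num : (0:ℝ) < 1/2) (by linarith : 1/2 ≤ 1 - δ)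
      norm_num at h
      linarith
    have hscn : ‖sc‖ ≤ η / δ := by
      rw [le_div_iff₀ hδpos, mul_comm]
      exact hscnorm
    have hηδ : η / δ = ε / 8 := by
      rw [hηdef, hδdef]
      field_simp
      ring
    calc ‖W‖ ≤ ‖PBc sp‖ + ‖PB sn‖ + ‖sc‖ := t1
      _ ≤ ((1 - δ)⁻¹ * ‖PBc p1‖ + (1 - δ)⁻¹ * ‖PB n1‖) + η / δ :=
          add_le_add (add_le_add hspn hsnn) hscn
      _ = (1 - δ)⁻¹ * (‖PBc p1‖ + ‖PB n1‖) + η / δ := by ring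
      _ ≤ 2 * (η / 2) + η / δ :=
          add_le_add_left (mul_le_mul hinv2 hkey2
            (add_nonneg (norm_nonneg _) (norm_nonneg _)) (by norm_num)) _
      _ = η + ε / 8 := by rw [hηδ]; ring
      _ ≤ ε / 16 + ε / 8 := by linarith
      _ = 3 * ε / 16 := by ring
  have hSRfinal : ‖S - R‖ ≤ 3 * ε / 16 := hSRle.trans hWnorm
  -- the endgame
  set c : ℝ := ‖R one‖ with hcdef
  have hcclose : |c - 1| ≤ 3 * ε / 16 := by
    have h1 : |‖R‖ - ‖S‖| ≤ ‖R - S‖ := abs_norm_sub_norm_le R S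
    rw [hSnorm, hRnorm] at h1
    calc |c - 1| ≤ ‖R - S‖ := h1
      _ = ‖S - R‖ := norm_sub_rev R S
      _ ≤ 3 * ε / 16 := hSRfinal
  have hcpos : 0 < c := by
    rcases abs_le.1 hcclose with ⟨u1, u2⟩
    linarith
  have hcne : c ≠ 0 := ne_of_gt hcpos
  refine ⟨f₁, c⁻¹ • R, hf₁norm, ?_, ?_, ?_, ?_, ?_⟩
  · intro f hf
    rw [ContinuousLinearMap.smul_apply]
    exact smul_nonneg_Lp (inv_nonneg.2 hcpos.le) (hRpos f hf)
  · have hns : ‖c⁻¹ • R‖ = ‖c⁻¹‖ * ‖R‖ := norm_smul c⁻¹ R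
    rw [hns, Real.norm_of_nonneg (inv_nonneg.2 hcpos.le), hRnorm, inv_mul_cancel₀ hcne]
  · rw [ContinuousLinearMap.smul_apply, norm_smul,
      Real.norm_of_nonneg (inv_nonneg.2 hcpos.le), hnormeq, inv_mul_cancel₀ hcne]
  · calc ‖f₁ - f₀‖ ≤ δ := hclose
      _ < ε := by rw [hδdef]; linarith
  · have hns2 : ‖(c⁻¹ - 1) • R‖ = ‖c⁻¹ - 1‖ * ‖R‖ := norm_smul (c⁻¹ - 1) R
    have hTR : ‖c⁻¹ • R - R‖ = |c⁻¹ - 1| * c := by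
      rw [show c⁻¹ • R - R = (c⁻¹ - 1) • R from by rw [sub_smul, one_smul],
        hns2, Real.norm_eq_abs, hRnorm]
    have h2 : |c⁻¹ - 1| * c = |1 - c| := by
      rw [show |c⁻¹ - 1| * c = |c⁻¹ - 1| * |c| from by rw [abs_of_nonneg hcpos.le],
        ← abs_mul, sub_mul, inv_mul_cancel₀ hcne, one_mul]
    have h3 : |1 - c| ≤ 3 * ε / 16 := by rwa [abs_sub_comm] at hcclose
    have h4 : c⁻¹ • R - S = (c⁻¹ • R - R) + (R - S) := by abel
    calc ‖c⁻¹ • R - S‖ = ‖(c⁻¹ • R - R) + (R - S)‖ := by rw [← h4]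
      _ ≤ ‖c⁻¹ • R - R‖ + ‖R - S‖ := norm_add_le _ _
      _ = |1 - c| + ‖S - R‖ := by rw [hTR, h2, norm_sub_rev]
      _ ≤ 3 * ε / 16 + 3 * ε / 16 := add_le_add h3 hSRfinal
      _ < ε := by linarith
end

section
/- Let S : c₀ → L₁(μ) be a positive linear operator with ‖S‖ = 1, let x₀ ∈ c₀ with ‖x₀‖∞ = 1 and ‖S(x₀)‖₁ > 1 - η² for some 0 < η < 1. Let C = {k ∈ ℕ : |x₀(k)| ≤ 1 - η}. Then ‖S(x·χ_C)‖₁ ≤ η for every x in the closed unit ball of c₀. -/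
open MeasureTheory Set ZeroAtInfty

noncomputable def cabs (f : C₀(ℕ, ℝ)) : C₀(ℕ, ℝ) where
  toFun := fun n => |f n|
  continuous_toFun := continuous_of_discreteTopology
  zero_at_infty' := by simpa using (zero_at_infty f).abs

@[simp] lemma cabs_apply (f : C₀(ℕ, ℝ)) (n : ℕ) : cabs f n = |f n| := rfl

lemma c0_norm_le (f : C₀(ℕ, ℝ)) {M : ℝ} (hM : 0 ≤ M) (h : ∀ n, |f n| ≤ M) : ‖f‖ ≤ M := by
  rw [← ZeroAtInftyContinuousMap.norm_toBCF_eq_norm]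
  exact (BoundedContinuousFunction.norm_le hM).mpr h

lemma c0_coord_le (f : C₀(ℕ, ℝ)) (n : ℕ) : |f n| ≤ ‖f‖ := by
  rw [← ZeroAtInftyContinuousMap.norm_toBCF_eq_norm]
  exact f.toBCF.norm_coe_le_norm n

/-- Let `S : c₀ → L₁(μ)` be a positive operator of norm one, `x₀ ∈ c₀` with `‖x₀‖∞ = 1` and
`‖S x₀‖₁ > 1 - η²` for some `0 < η < 1`, and `C = {k : |x₀ k| ≤ 1 - η}`.  Then
`‖S (x·χ_C)‖₁ ≤ η` for every `x` in the closed unit ball of `c₀`. -/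
theorem norm_image_indicator_C_small_c0
    {Ω : Type*} [MeasurableSpace Ω] (μ : Measure Ω)
    (S : C₀(ℕ, ℝ) →L[ℝ] Lp ℝ 1 μ)
    (hSpos : ∀ x : C₀(ℕ, ℝ), (∀ n, 0 ≤ x n) → 0 ≤ S x) (hSnorm : ‖S‖ = 1)
    (x₀ : C₀(ℕ, ℝ)) (hx₀ : ‖x₀‖ = 1)
    (η : ℝ) (hη0 : 0 < η) (hη1 : η < 1)
    (hS : ‖S x₀‖ > 1 - η ^ 2) :
    ∀ x y : C₀(ℕ, ℝ), ‖x‖ ≤ 1 →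
      (∀ n, y n = indicator {k | |x₀ k| ≤ 1 - η} (fun k => x k) n) →
      ‖S y‖ ≤ η := by
  intro x y hx hy
  set a := cabs x₀ with ha
  set b := cabs y with hb
  -- domination: |S f| ≤ S (cabs f)
  have hdom : ∀ f : C₀(ℕ, ℝ), ‖S f‖ ≤ ‖S (cabs f)‖ := by
    intro f
    have h1 : S f ≤ S (cabs f) := by
      have := hSpos (cabs f - f) (fun n => by
        simp only [ZeroAtInftyContinuousMap.sub_apply, cabs_apply]
        linarith [le_abs_self (f n)])
      rw [map_sub] at this
      exact sub_nonneg.mp this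
    have h2 : -S (cabs f) ≤ S f := by
      have := hSpos (cabs f + f) (fun n => by
        simp only [ZeroAtInftyContinuousMap.add_apply, cabs_apply]
        linarith [neg_abs_le (f n)])
      rw [map_add] at this
      rwa [← sub_nonneg, sub_neg_eq_add, add_comm]
    have habs : |S f| ≤ |S (cabs f)| := by
      have hnn : 0 ≤ S (cabs f) := hSpos _ (fun n => abs_nonneg _)
      rw [abs_of_nonneg hnn]
      exact abs_le'.mpr ⟨h1, neg_le.2 h2⟩
    exact norm_le_norm_of_abs_le_abs habs
  -- L1 additivity of norm on nonneg
  have hadd : ∀ f g : Lp ℝ 1 μ, 0 ≤ f → 0 ≤ g → ‖f + g‖ = ‖f‖ + ‖g‖ := by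
    intro f g hf hg
    rw [L1.norm_eq_integral_norm, L1.norm_eq_integral_norm, L1.norm_eq_integral_norm,
      ← integral_add (L1.integrable_coeFn f).norm (L1.integrable_coeFn g).norm]
    refine integral_congr_ae ?_
    filter_upwards [Lp.coeFn_add f g, (Lp.coeFn_nonneg f).mpr hf,
      (Lp.coeFn_nonneg g).mpr hg] with ω h1 h2 h3
    simp only [h1, Pi.add_apply, Real.norm_eq_abs]
    rw [abs_of_nonneg h2, abs_of_nonneg h3, abs_of_nonneg (add_nonneg h2 h3)]
  -- pointwise bound : a n + η * b n ≤ 1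
  have hx₀n : ∀ n, |x₀ n| ≤ 1 := fun n => hx₀ ▸ c0_coord_le x₀ n
  have hpt : ∀ n, |x₀ n| + η * |y n| ≤ 1 := by
    intro n
    by_cases hn : |x₀ n| ≤ 1 - η
    · have : |y n| ≤ 1 := by
        rw [hy n, Set.indicator_of_mem (show n ∈ {k | |x₀ k| ≤ 1 - η} from hn)]
        exact (c0_coord_le x n).trans hx
      nlinarith
    · have : y n = 0 := by rw [hy n, Set.indicator_of_notMem (show n ∉ {k | |x₀ k| ≤ 1 - η} from hn)]
      rw [this]
      simpa using hx₀n n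
  have hnormab : ‖a + η • b‖ ≤ 1 := by
    refine c0_norm_le _ zero_le_one (fun n => ?_)
    have h0 : (a + η • b) n = |x₀ n| + η * |y n| := by
      simp [ha, hb, ZeroAtInftyContinuousMap.add_apply, ZeroAtInftyContinuousMap.smul_apply, smul_eq_mul]
    rw [h0, abs_of_nonneg (by positivity)]
    exact hpt n
  have hSa : 0 ≤ S a := hSpos _ (fun n => abs_nonneg _)
  have hSb : 0 ≤ S b := hSpos _ (fun n => abs_nonneg _)
  have hSbsmul : (0 : Lp ℝ 1 μ) ≤ η • S b := by
    rw [← S.map_smul]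
    exact hSpos _ (fun n => by
      simp only [ZeroAtInftyContinuousMap.smul_apply, smul_eq_mul, hb, cabs_apply]
      positivity)
  have key : ‖S a‖ + η * ‖S b‖ ≤ 1 := by
    have h1 : ‖S a + η • S b‖ = ‖S a‖ + ‖η • S b‖ := hadd _ _ hSa hSbsmul
    have h2 : ‖η • S b‖ = η * ‖S b‖ := by
      rw [norm_smul, Real.norm_of_nonneg hη0.le]
    have h3 : S a + η • S b = S (a + η • b) := by rw [map_add, S.map_smul]
    calc ‖S a‖ + η * ‖S b‖ = ‖S (a + η • b)‖ := by rw [← h3, h1, h2]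
      _ ≤ ‖S‖ * ‖a + η • b‖ := S.le_opNorm _
      _ ≤ 1 := by rw [hSnorm, one_mul]; exact hnormab
  have hSaN : 1 - η ^ 2 < ‖S a‖ := lt_of_lt_of_le hS (hdom x₀)
  have hSbη : ‖S b‖ < η := by nlinarith
  exact (hdom y).trans hSbη.le
end

section
/- Define on c₀ the norm |‖x‖| = ‖x‖∞ + ‖(xₙ/2ⁿ)ₙ‖₂, where ‖·‖₂ is the ℓ₂ norm. Then |‖·‖| is a norm on c₀ equivalent to the sup norm, it is a lattice norm (|x| ≤ |y| coordinatewise implies |‖x‖| ≤ |‖y‖|), and the resulting Banach space Y = (c₀, |‖·‖|) is strictly convex. -/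
/-!
`|‖x‖|` is the graph norm `‖x‖ + ‖T x‖` of the bounded, injective operator
`T : c₀ → ℓ²`, `x ↦ (xₙ / 2ⁿ)ₙ`. Graph norms of bounded operators are norms equivalent to the
original one, and this one is monotone in `|xₙ|` because both summands are. If `‖·‖ + ‖T ·‖`
were not strictly convex, equality in its triangle inequality for `x + y` would force equality in
the one of `ℓ²`, so `T x` and `T y` lie on a common ray; as `T` is injective, so do `x` and `y`,
and unit vectors on a common ray coincide.
-/

open ZeroAtInfty

/-- The norm `|‖x‖| = ‖x‖∞ + ‖(xₙ/2ⁿ)ₙ‖₂` on `c₀`. -/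
noncomputable def tripleNorm (x : C₀(ℕ, ℝ)) : ℝ :=
  ‖x‖ + Real.sqrt (∑' n : ℕ, (x n / 2 ^ n) ^ 2)

section GraphNorm

variable {E F : Type*} [NormedAddCommGroup E] [NormedSpace ℝ E]
  [NormedAddCommGroup F] [NormedSpace ℝ F] (T : E →L[ℝ] F)

noncomputable def graphNorm (x : E) : ℝ := ‖x‖ + ‖T x‖

lemma norm_le_graphNorm (x : E) : ‖x‖ ≤ graphNorm T x :=
  le_add_of_nonneg_right (norm_nonneg _)

lemma graphNorm_le (x : E) : graphNorm T x ≤ (1 + ‖T‖) * ‖x‖ := by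
  rw [graphNorm, add_mul, one_mul]
  gcongr
  exact T.le_opNorm x

lemma graphNorm_eq_zero_iff {x : E} : graphNorm T x = 0 ↔ x = 0 := by
  refine ⟨fun h => norm_le_zero_iff.mp (h ▸ norm_le_graphNorm T x), fun h => ?_⟩
  simp [graphNorm, h]

lemma graphNorm_smul (c : ℝ) (x : E) : graphNorm T (c • x) = |c| * graphNorm T x := by
  simp only [graphNorm, map_smul, norm_smul, Real.norm_eq_abs, mul_add]

lemma graphNorm_add_le (x y : E) : graphNorm T (x + y) ≤ graphNorm T x + graphNorm T y := by
  simp only [graphNorm, map_add]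
  linarith [norm_add_le x y, norm_add_le (T x) (T y)]

lemma graphNorm_add_lt_two [StrictConvexSpace ℝ F] (hT : Function.Injective T) {x y : E}
    (hx : graphNorm T x = 1) (hy : graphNorm T y = 1) (hxy : x ≠ y) :
    graphNorm T (x + y) < 2 := by
  by_contra! h
  have hT_eq : ‖T x + T y‖ = ‖T x‖ + ‖T y‖ := by
    simp only [graphNorm, map_add] at hx hy h
    linarith [norm_add_le x y, norm_add_le (T x) (T y)]
  have hray : SameRay ℝ x y := hT.sameRay_map_iff.mp (sameRay_iff_norm_add.mpr hT_eq)
  obtain ⟨u, a, b, ha, hb, -, rfl, rfl⟩ := hray.exists_eq_smul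
  rw [graphNorm_smul, abs_of_nonneg ha] at hx
  rw [graphNorm_smul, abs_of_nonneg hb] at hy
  have hu : graphNorm T u ≠ 0 := right_ne_zero_of_mul_eq_one hx
  exact hxy (congrArg (· • u) (mul_right_cancel₀ hu (hx.trans hy.symm)))

end GraphNorm

namespace ZeroAtInftyContinuousMap

variable {α β : Type*} [TopologicalSpace α] [NormedAddCommGroup β]

lemma norm_apply_le (f : C₀(α, β)) (a : α) : ‖f a‖ ≤ ‖f‖ := by
  rw [← norm_toBCF_eq_norm]
  exact f.toBCF.norm_coe_le_norm a

lemma norm_mono {f g : C₀(α, β)} (h : ∀ a, ‖f a‖ ≤ ‖g a‖) : ‖f‖ ≤ ‖g‖ := by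
  rw [← norm_toBCF_eq_norm, BoundedContinuousFunction.norm_le (norm_nonneg _)]
  exact fun a => (h a).trans (g.norm_apply_le a)

end ZeroAtInftyContinuousMap

lemma lp.norm_sq_eq_tsum {ι : Type*} (f : lp (fun _ : ι => ℝ) 2) : ‖f‖ ^ 2 = ∑' i, f i ^ 2 := by
  rw [← real_inner_self_eq_norm_sq, lp.inner_eq_tsum]
  simp [sq]

section Weighted

variable {ι : Type*} [TopologicalSpace ι] (w : lp (fun _ : ι => ℝ) 2)

lemma norm_mul_weight_le (f : C₀(ι, ℝ)) (i : ι) : ‖f i * w i‖ ≤ ‖(‖f‖ • w) i‖ := by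
  rw [lp.coeFn_smul, Pi.smul_apply, norm_mul, norm_smul, norm_norm]
  gcongr
  exact f.norm_apply_le i

noncomputable def weightedℓ2 : C₀(ι, ℝ) →L[ℝ] lp (fun _ : ι => ℝ) 2 :=
  LinearMap.mkContinuous
    { toFun := fun f => ⟨fun i => f i * w i, (lp.memℓp (‖f‖ • w)).mono' (norm_mul_weight_le w f)⟩
      map_add' := fun f g => lp.ext <| funext fun i => add_mul (f i) (g i) (w i)
      map_smul' := fun c f => lp.ext <| funext fun i => mul_assoc c (f i) (w i) }
    ‖w‖ fun f => by
      calc _ ≤ ‖‖f‖ • w‖ := lp.norm_mono two_ne_zero (norm_mul_weight_le w f)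
        _ = ‖w‖ * ‖f‖ := by rw [lp.norm_const_smul two_ne_zero, norm_norm, mul_comm]

@[simp]
lemma weightedℓ2_apply (f : C₀(ι, ℝ)) (i : ι) : weightedℓ2 w f i = f i * w i := rfl

lemma weightedℓ2_injective (hw : ∀ i, w i ≠ 0) : Function.Injective (weightedℓ2 w) := by
  intro f g h
  ext i
  simpa [hw i] using congrArg (fun v : lp (fun _ : ι => ℝ) 2 => v i) h

lemma norm_weightedℓ2_mono {f g : C₀(ι, ℝ)} (h : ∀ i, ‖f i‖ ≤ ‖g i‖) :
    ‖weightedℓ2 w f‖ ≤ ‖weightedℓ2 w g‖ :=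
  lp.norm_mono two_ne_zero fun i => by
    simp only [weightedℓ2_apply, norm_mul]
    gcongr
    exact h i

end Weighted

noncomputable def invTwoPow : lp (fun _ : ℕ => ℝ) 2 :=
  ⟨fun n => (2 ^ n)⁻¹, (memℓp_gen (by simpa using summable_geometric_two)).of_exponent_ge
    (by norm_num : (1 : ENNReal) ≤ 2)⟩

lemma tripleNorm_eq_graphNorm (x : C₀(ℕ, ℝ)) :
    tripleNorm x = graphNorm (weightedℓ2 invTwoPow) x := by
  rw [tripleNorm, graphNorm, ← Real.sqrt_sq (norm_nonneg (weightedℓ2 invTwoPow x)),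
    lp.norm_sq_eq_tsum]
  rfl

/-- `|‖·‖|` is a norm on `c₀`, equivalent to the sup norm, it is a lattice norm, and the
resulting space is strictly convex. -/
theorem tripleNorm_is_strictly_convex_lattice_norm :
    (∀ x : C₀(ℕ, ℝ), tripleNorm x = 0 ↔ x = 0)
    ∧ (∀ (c : ℝ) (x : C₀(ℕ, ℝ)), tripleNorm (c • x) = |c| * tripleNorm x)
    ∧ (∀ x y : C₀(ℕ, ℝ), tripleNorm (x + y) ≤ tripleNorm x + tripleNorm y)
    ∧ (∃ a b : ℝ, 0 < a ∧ 0 < b ∧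
        ∀ x : C₀(ℕ, ℝ), a * ‖x‖ ≤ tripleNorm x ∧ tripleNorm x ≤ b * ‖x‖)
    ∧ (∀ x y : C₀(ℕ, ℝ), (∀ n, |x n| ≤ |y n|) → tripleNorm x ≤ tripleNorm y)
    ∧ (∀ x y : C₀(ℕ, ℝ), tripleNorm x = 1 → tripleNorm y = 1 → x ≠ y →
        tripleNorm (x + y) < 2) := by
  set T := weightedℓ2 invTwoPow
  have hT : Function.Injective T := weightedℓ2_injective _ fun n => inv_ne_zero (by positivity)
  simp only [tripleNorm_eq_graphNorm]
  refine ⟨fun x => graphNorm_eq_zero_iff T, graphNorm_smul T, graphNorm_add_le T,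
    ⟨1, 1 + ‖T‖, one_pos, by positivity, fun x => ⟨by simpa using norm_le_graphNorm T x,
      graphNorm_le T x⟩⟩, fun x y h => ?_, fun x y => graphNorm_add_lt_two T hT⟩
  have h' : ∀ n, ‖x n‖ ≤ ‖y n‖ := by simpa only [Real.norm_eq_abs] using h
  exact add_le_add (ZeroAtInftyContinuousMap.norm_mono h') (norm_weightedℓ2_mono _ h')
end
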